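/- arXiv:1308.0401 — 3 statements merged into one kernel-verified Lean document; each statement's English description precedes it below -/
import Mathlib

section
/- Let Γ be a finite connected bipartite graph with ordered bipartition (B|B'), G ≤ Aut(Γ), 1 ≠ N ⊴ G, and r ≥ 3 an integer, such that Γ is r-starlike relative to N and locally (G,4)-distance transitive. Then G acts faithfully on B and on B'; the permutation group induced by G on B is transitive of rank 2 or 3; the permutation group induced by G on B' is transitive, imprimitive, and of rank 3; and for each vertex x ∈ B, the permutation group induced by the stabiliser G_x on the neighbourhood Γ(x) is 2-transitive of degree r. -/
open SimpleGraph

section Prelude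

variable {V : Type*}

/-- `g` is an automorphism of the graph `Γ`. -/
def IsGraphAut (Γ : SimpleGraph V) (g : Equiv.Perm V) : Prop :=
  ∀ u v : V, Γ.Adj (g u) (g v) ↔ Γ.Adj u v

/-- `(B | Bᶜ)` is an (ordered) bipartition of `Γ`: every edge joins `B` and `Bᶜ`. -/
def IsBipartition (Γ : SimpleGraph V) (B : Set V) : Prop :=
  ∀ u v : V, Γ.Adj u v → (u ∈ B ↔ v ∉ B)

/-- The orbit of `x` under a subgroup `N` of permutations of `V`. -/
def POrbit (N : Subgroup (Equiv.Perm V)) (x : V) : Set V :=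
  {y | ∃ n ∈ N, n x = y}

/-- `Γ` is locally `(G,s)`-distance transitive: the diameter is at least `s` and for
every vertex `v` and every `1 ≤ i ≤ s` the stabiliser of `v` in `G` is transitive on
the set of vertices at distance `i` from `v`. -/
def LocallyDistTrans (Γ : SimpleGraph V) (G : Subgroup (Equiv.Perm V)) (s : ℕ) : Prop :=
  s ≤ Γ.diam ∧
    ∀ (v x y : V) (i : ℕ), 1 ≤ i → i ≤ s → Γ.dist v x = i → Γ.dist v y = i →
      ∃ g ∈ G, g v = v ∧ g x = y

/-- `Γ`, bipartite with ordered bipartition `(B | Bᶜ)`, is `r`-starlike relative to `N`: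
`N` leaves `B` invariant, is transitive on `B`, and has exactly `r` orbits on `Bᶜ`. -/
def IsStarlike (Γ : SimpleGraph V) (B : Set V) (N : Subgroup (Equiv.Perm V)) (r : ℕ) : Prop :=
  (∀ n ∈ N, ∀ v : V, n v ∈ B ↔ v ∈ B) ∧
    (∀ x ∈ B, ∀ y ∈ B, ∃ n ∈ N, n x = y) ∧
    {S : Set V | ∃ x ∈ Bᶜ, S = POrbit N x}.ncard = r

/-- `G` is transitive on the set `S` of (ordered) pairs. -/
def PairTrans (G : Subgroup (Equiv.Perm V)) (S : Set (V × V)) : Prop :=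
  ∀ p ∈ S, ∀ q ∈ S, ∃ g ∈ G, g p.1 = q.1 ∧ g p.2 = q.2

/-- The adjacency design of the bipartite graph `Γ` with ordered bipartition `(B | Bᶜ)`
(points `B`, blocks `Bᶜ`, incidence = adjacency) is `G`-pairwise transitive. -/
def AdjPT (Γ : SimpleGraph V) (B : Set V) (G : Subgroup (Equiv.Perm V)) : Prop :=
  (∀ g ∈ G, ∀ v : V, g v ∈ B ↔ v ∈ B) ∧
  PairTrans G {p | p.1 ∈ B ∧ p.2 ∈ Bᶜ ∧ Γ.Adj p.1 p.2} ∧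
  PairTrans G {p | p.1 ∈ B ∧ p.2 ∈ Bᶜ ∧ ¬ Γ.Adj p.1 p.2} ∧
  PairTrans G {p | p.1 ∈ B ∧ p.2 ∈ B ∧ p.1 ≠ p.2 ∧ ∃ b ∈ Bᶜ, Γ.Adj p.1 b ∧ Γ.Adj p.2 b} ∧
  PairTrans G {p | p.1 ∈ B ∧ p.2 ∈ B ∧ p.1 ≠ p.2 ∧ ¬ ∃ b ∈ Bᶜ, Γ.Adj p.1 b ∧ Γ.Adj p.2 b} ∧
  PairTrans G {p | p.1 ∈ Bᶜ ∧ p.2 ∈ Bᶜ ∧ p.1 ≠ p.2 ∧ ∃ x ∈ B, Γ.Adj x p.1 ∧ Γ.Adj x p.2} ∧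
  PairTrans G {p | p.1 ∈ Bᶜ ∧ p.2 ∈ Bᶜ ∧ p.1 ≠ p.2 ∧ ¬ ∃ x ∈ B, Γ.Adj x p.1 ∧ Γ.Adj x p.2}

/-- The adjacency design of `Γ` (points `B`, blocks `Bᶜ`) is `N`-nicely affine:
`N` acts as automorphisms preserving the biparts, transitively on points, and there is a
constant `μ` such that distinct blocks in different `N`-orbits have exactly `μ` common
points, while distinct blocks in the same `N`-orbit have no common point. -/
def AdjNA (Γ : SimpleGraph V) (B : Set V) (N : Subgroup (Equiv.Perm V)) : Prop :=
  (∀ n ∈ N, ∀ v : V, n v ∈ B ↔ v ∈ B) ∧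
  (∀ x ∈ B, ∀ y ∈ B, ∃ n ∈ N, n x = y) ∧
  ∃ μ : ℕ, ∀ b ∈ Bᶜ, ∀ b' ∈ Bᶜ, b ≠ b' →
    ((b' ∈ POrbit N b → ¬ ∃ x, Γ.Adj x b ∧ Γ.Adj x b') ∧
     (b' ∉ POrbit N b → {x | Γ.Adj x b ∧ Γ.Adj x b'}.ncard = μ))

/-- The adjacency design of `Γ` (points `B`, blocks `Bᶜ`) is affine: the blocks can be
partitioned into parallel classes, and there is a positive constant `μ` such that blocks
in distinct parallel classes have exactly `μ` common points. -/
def AdjAffine (Γ : SimpleGraph V) (B : Set V) : Prop :=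
  ∃ 𝓒 : Set (Set V), (∀ C ∈ 𝓒, C ⊆ Bᶜ) ∧ (∀ b ∈ Bᶜ, ∃! C, C ∈ 𝓒 ∧ b ∈ C) ∧
    (∀ C ∈ 𝓒, ∀ x ∈ B, ∃! b, b ∈ C ∧ Γ.Adj x b) ∧
    ∃ μ : ℕ, 0 < μ ∧ ∀ C ∈ 𝓒, ∀ C' ∈ 𝓒, C ≠ C' → ∀ b ∈ C, ∀ b' ∈ C',
      {x | Γ.Adj x b ∧ Γ.Adj x b'}.ncard = μ

end Prelude

section DesignPrelude

variable {P L : Type*}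

/-- The design `(P, L, I)` is `G`-pairwise transitive. -/
def DesignPT (I : P → L → Prop) (G : Type*) [Group G] [MulAction G P] [MulAction G L] :
    Prop :=
  (∀ (x : P) (b : L) (x' : P) (b' : L), I x b → I x' b' →
      ∃ g : G, g • x = x' ∧ g • b = b') ∧
  (∀ (x : P) (b : L) (x' : P) (b' : L), ¬ I x b → ¬ I x' b' →
      ∃ g : G, g • x = x' ∧ g • b = b') ∧
  (∀ x y x' y' : P, x ≠ y → x' ≠ y' → (∃ b, I x b ∧ I y b) → (∃ b, I x' b ∧ I y' b) →
      ∃ g : G, g • x = x' ∧ g • y = y') ∧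
  (∀ x y x' y' : P, x ≠ y → x' ≠ y' → ¬ (∃ b, I x b ∧ I y b) → ¬ (∃ b, I x' b ∧ I y' b) →
      ∃ g : G, g • x = x' ∧ g • y = y') ∧
  (∀ b c b' c' : L, b ≠ c → b' ≠ c' → (∃ x, I x b ∧ I x c) → (∃ x, I x b' ∧ I x c') →
      ∃ g : G, g • b = b' ∧ g • c = c') ∧
  (∀ b c b' c' : L, b ≠ c → b' ≠ c' → ¬ (∃ x, I x b ∧ I x c) → ¬ (∃ x, I x b' ∧ I x c') →
      ∃ g : G, g • b = b' ∧ g • c = c')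

/-- The design `(P, L, I)` is `N`-nicely affine for the subgroup `N` of `G`. -/
def DesignNA (I : P → L → Prop) (G : Type*) [Group G] [MulAction G P] [MulAction G L]
    (N : Subgroup G) : Prop :=
  (∀ x y : P, ∃ n ∈ N, n • x = y) ∧
  ∃ μ : ℕ, ∀ b b' : L, b ≠ b' →
    (((∃ n ∈ N, n • b = b') → ¬ ∃ x, I x b ∧ I x b') ∧
     ((¬ ∃ n ∈ N, n • b = b') → {x | I x b ∧ I x b'}.ncard = μ))

/-- The incidence graph of the design `(P, L, I)`. -/
def DIncGraph (I : P → L → Prop) : SimpleGraph (P ⊕ L) :=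
  SimpleGraph.fromRel (fun a b => ∃ x s, a = Sum.inl x ∧ b = Sum.inr s ∧ I x s)

end DesignPrelude

section SetDesign

variable {V : Type*}

/-- Pairwise transitivity for a design whose points are the elements of `V`, whose
blocks are the members of `𝓑` (identified with their point-sets) and whose
incidence relation is membership; `G` is a group of permutations of `V`. -/
def SetPT (𝓑 : Set (Set V)) (G : Subgroup (Equiv.Perm V)) : Prop :=
  (∀ x : V, ∀ s ∈ 𝓑, ∀ x' : V, ∀ s' ∈ 𝓑, x ∈ s → x' ∈ s' →
      ∃ g ∈ G, g x = x' ∧ (fun z => g z) '' s = s') ∧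
  (∀ x : V, ∀ s ∈ 𝓑, ∀ x' : V, ∀ s' ∈ 𝓑, x ∉ s → x' ∉ s' →
      ∃ g ∈ G, g x = x' ∧ (fun z => g z) '' s = s') ∧
  (∀ x y x' y' : V, x ≠ y → x' ≠ y' → (∃ s ∈ 𝓑, x ∈ s ∧ y ∈ s) → (∃ s ∈ 𝓑, x' ∈ s ∧ y' ∈ s) →
      ∃ g ∈ G, g x = x' ∧ g y = y') ∧
  (∀ x y x' y' : V, x ≠ y → x' ≠ y' → ¬ (∃ s ∈ 𝓑, x ∈ s ∧ y ∈ s) → ¬ (∃ s ∈ 𝓑, x' ∈ s ∧ y' ∈ s) →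
      ∃ g ∈ G, g x = x' ∧ g y = y') ∧
  (∀ s ∈ 𝓑, ∀ t ∈ 𝓑, ∀ s' ∈ 𝓑, ∀ t' ∈ 𝓑, s ≠ t → s' ≠ t' →
      (s ∩ t).Nonempty → (s' ∩ t').Nonempty →
      ∃ g ∈ G, (fun z => g z) '' s = s' ∧ (fun z => g z) '' t = t') ∧
  (∀ s ∈ 𝓑, ∀ t ∈ 𝓑, ∀ s' ∈ 𝓑, ∀ t' ∈ 𝓑, s ≠ t → s' ≠ t' →
      s ∩ t = ∅ → s' ∩ t' = ∅ →
      ∃ g ∈ G, (fun z => g z) '' s = s' ∧ (fun z => g z) '' t = t')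

/-- Nice affineness for a design with point set `V`, blocks `𝓑` (point-sets) and
incidence given by membership, relative to a permutation group `N`. -/
def SetNA (𝓑 : Set (Set V)) (N : Subgroup (Equiv.Perm V)) : Prop :=
  (∀ x y : V, ∃ n ∈ N, n x = y) ∧
  (∀ n ∈ N, ∀ s ∈ 𝓑, (fun z => n z) '' s ∈ 𝓑) ∧
  ∃ μ : ℕ, ∀ s ∈ 𝓑, ∀ s' ∈ 𝓑, s ≠ s' →
    (((∃ n ∈ N, (fun z => n z) '' s = s') → s ∩ s' = ∅) ∧
     ((¬ ∃ n ∈ N, (fun z => n z) '' s = s') → (s ∩ s').ncard = μ))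

end SetDesign

section QuotientGraph

variable {V : Type*}

/-- The setoid on vertices whose classes are the `N`-orbits. -/
def orbitSetoid (N : Subgroup (Equiv.Perm V)) : Setoid V where
  r x y := ∃ n ∈ N, n x = y
  iseqv := by
    refine ⟨fun x => ⟨1, N.one_mem, rfl⟩, ?_, ?_⟩
    · rintro x y ⟨n, hn, rfl⟩
      exact ⟨n⁻¹, N.inv_mem hn, by simp⟩
    · rintro x y z ⟨n, hn, rfl⟩ ⟨m, hm, rfl⟩
      exact ⟨m * n, N.mul_mem hm hn, rfl⟩

/-- The normal quotient graph `Γ_N`: vertices are the `N`-orbits, two distinct orbits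
being adjacent iff some vertex of one is adjacent to some vertex of the other. -/
def quotGraph (Γ : SimpleGraph V) (N : Subgroup (Equiv.Perm V)) :
    SimpleGraph (Quotient (orbitSetoid N)) :=
  SimpleGraph.fromRel (fun a b => ∃ x y : V, Γ.Adj x y ∧
    Quotient.mk (orbitSetoid N) x = a ∧ Quotient.mk (orbitSetoid N) y = b)

end QuotientGraph

section Subdivision

variable {W : Type*}

/-- The subdivision graph `S(Σ)` of a graph `Σ`: vertices are `EΣ ⊕ VΣ`, an edge
being adjacent to its endpoints. -/
def SubdivisionGraph (Sg : SimpleGraph W) : SimpleGraph (↥Sg.edgeSet ⊕ W) :=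
  SimpleGraph.fromRel (fun a b => ∃ (e : Sg.edgeSet) (w : W),
    a = Sum.inl e ∧ b = Sum.inr w ∧ w ∈ (e : Sym2 W))

/-- The graph on `B'` in which two vertices are adjacent iff they are at distance `2`
in `Γ`. -/
def distTwoGraph (Γ : SimpleGraph W) (B' : Set W) : SimpleGraph ↥B' where
  Adj a b := Γ.dist ↑a ↑b = 2
  symm := by
    constructor
    intro a b h
    rwa [SimpleGraph.dist_comm]
  loopless := by
    constructor
    intro a h
    simp [SimpleGraph.dist_self] at h

/-- `f 0, f 1, …, f t` is a `t`-arc of `Sg`. -/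
def IsArcOf (Sg : SimpleGraph W) (t : ℕ) (f : ℕ → W) : Prop :=
  (∀ i : ℕ, i < t → Sg.Adj (f i) (f (i + 1))) ∧
  (∀ i : ℕ, 1 ≤ i → i + 1 ≤ t → f (i - 1) ≠ f (i + 1))

end Subdivision

/-!
Call the vertices of `B` points, those of `Bᶜ` blocks, and the `N`-orbits on blocks classes.
As `N` is normal, the stabiliser `G_b` of a block preserves its class, so by local distance
transitivity each sphere `Γᵢ(b)`, `i ≤ 4`, lies entirely inside or entirely outside the class of
`b`. Since a point meets every class, this forces every point to lie on exactly one block of each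
class and `Γ₄(b)` to lie inside the class of `b`. Going through a third class (`r ≥ 3`), blocks
of different classes always share a point, so two blocks are at distance `0`, `2` (different
classes) or `4` (same class). The suborbits of `G` on either part are then the spheres, the
classes form a `G`-invariant partition of `Bᶜ`, `Γ(x)` meets each class once, and the stabiliser
of `y ∈ Γ(x)` moves the other neighbours of `x` transitively. Faithfulness holds because local
`2`-distance transitivity in diameter at least `3` forbids distinct vertices with equal
neighbourhoods.
-/

namespace SimpleGraph

variable {V : Type*} {Γ : SimpleGraph V} {B : Set V} {u v w : V}

theorem dist_le_two_of_adj_adj (huw : Γ.Adj u w) (hwv : Γ.Adj w v) : Γ.dist u v ≤ 2 := by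
  simpa using Γ.dist_le (.cons huw (.cons hwv .nil))

theorem dist_eq_two_of_adj_adj (hne : u ≠ v) (hnadj : ¬ Γ.Adj u v) (huw : Γ.Adj u w)
    (hwv : Γ.Adj w v) : Γ.dist u v = 2 :=
  le_antisymm (dist_le_two_of_adj_adj huw hwv)
    ((huw.reachable.trans hwv.reachable).one_lt_dist_of_ne_of_not_adj hne hnadj)

theorem Connected.exists_adj [Nontrivial V] (hconn : Γ.Connected) (v : V) : ∃ w, Γ.Adj v w :=
  have ⟨u, hu⟩ := exists_ne v
  (hconn v u).nonempty_neighborSet_left hu.symm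

theorem Connected.exists_adj_dist_eq {k : ℕ} (hconn : Γ.Connected) (h : Γ.dist u v = k + 1) :
    ∃ w, Γ.Adj w v ∧ Γ.dist u w = k := by
  obtain ⟨p, hp⟩ := hconn.exists_walk_length_eq_dist v u
  cases p with
  | nil => simp at h
  | cons hvw q =>
    rename_i w
    rw [Walk.length_cons, dist_comm, h] at hp
    have hq : Γ.dist u w ≤ k := by
      rw [dist_comm]
      exact (Γ.dist_le q).trans (by omega)
    have := hconn.dist_triangle (u := u) (v := w) (w := v)
    rw [dist_eq_one_iff_adj.mpr hvw.symm] at this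
    exact ⟨w, hvw.symm, by omega⟩

theorem Connected.exists_dist_eq_of_le {k : ℕ} (hconn : Γ.Connected) (h : k ≤ Γ.dist u v) :
    ∃ w, Γ.dist u w = k := by
  obtain ⟨j, hj⟩ := Nat.exists_eq_add_of_le h
  clear h
  induction j generalizing v with
  | zero => exact ⟨v, hj⟩
  | succ j ih =>
    obtain ⟨w, -, hw⟩ := hconn.exists_adj_dist_eq (k := k + j) (by omega)
    exact ih hw

theorem Connected.exists_le_dist {k : ℕ} (hconn : Γ.Connected) (h : k ≤ Γ.diam) :
    ∃ u v, k ≤ Γ.dist u v :=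
  have := hconn.nonempty
  have ⟨u, v, huv⟩ := Γ.exists_dist_eq_diam
  ⟨u, v, huv ▸ h⟩

theorem Connected.exists_dist_eq_of_two_mul_le_diam {k : ℕ} (hconn : Γ.Connected)
    (h : 2 * k ≤ Γ.diam) (u : V) : ∃ w, Γ.dist u w = k := by
  obtain ⟨v₁, v₂, hv⟩ := hconn.exists_le_dist h
  have := (hconn v₁ u).dist_triangle_left v₂
  rcases le_or_gt k (Γ.dist u v₁) with h₁ | h₁
  · exact hconn.exists_dist_eq_of_le h₁
  · exact hconn.exists_dist_eq_of_le (v := v₂) (by rw [dist_comm] at h₁; omega)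

theorem Walk.mem_of_even_length {S : Set V}
    (hS : ∀ ⦃z y z'⦄, z ∈ S → Γ.Adj z y → Γ.Adj y z' → z' ∈ S) :
    ∀ {u v : V} (p : Γ.Walk u v), u ∈ S → Even p.length → v ∈ S
  | _, _, .nil, hu, _ => hu
  | _, _, .cons _ .nil, _, hp => by simp at hp
  | _, _, .cons h (.cons h' q), hu, hp =>
    mem_of_even_length hS q (hS hu h h') (by simpa [Nat.even_add_one] using hp)

theorem dist_le_two_of_forall_adj (hadj : ∀ x ∈ B, ∀ c ∈ Bᶜ, Γ.Adj x c) (hB : B.Nonempty)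
    (hB' : Bᶜ.Nonempty) (u v : V) : Γ.dist u v ≤ 2 := by
  obtain ⟨x, hx⟩ := hB
  obtain ⟨c, hc⟩ := hB'
  by_cases hu : u ∈ B <;> by_cases hv : v ∈ B
  · exact dist_le_two_of_adj_adj (hadj u hu c hc) (hadj v hv c hc).symm
  · exact (dist_eq_one_iff_adj.mpr (hadj u hu v hv)).trans_le one_le_two
  · exact (dist_eq_one_iff_adj.mpr (hadj v hv u hu).symm).trans_le one_le_two
  · exact dist_le_two_of_adj_adj (hadj x hx u hu).symm (hadj x hx v hv)

theorem Connected.dist_le_two_of_forall_twin {a w : V} (hconn : Γ.Connected) (haw : Γ.Adj a w)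
    (htwin : ∀ c, Γ.dist a c = 2 → Γ.neighborSet c = Γ.neighborSet a) (u v : V) :
    Γ.dist u v ≤ 2 := by
  have hadj_of_twin : ∀ {x y}, Γ.neighborSet x = Γ.neighborSet a → Γ.Adj a y → Γ.Adj x y :=
    fun hx hy => by rwa [← mem_neighborSet, hx]
  have hball : ∀ v, Γ.dist a v ≤ 2 := by
    intro v
    by_contra! h
    obtain ⟨z, hz⟩ := hconn.exists_dist_eq_of_le (Nat.succ_le_of_lt h)
    obtain ⟨y, hyz, hy⟩ := hconn.exists_adj_dist_eq hz
    have haz : Γ.Adj a z := by rwa [← mem_neighborSet, ← htwin y hy]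
    simp [dist_eq_one_iff_adj.mpr haz] at hz
  have hclass : ∀ v, Γ.neighborSet v = Γ.neighborSet a ∨ Γ.Adj a v := by
    intro v
    have := hball v
    rcases (by omega : Γ.dist a v = 0 ∨ Γ.dist a v = 1 ∨ Γ.dist a v = 2) with h | h | h
    · exact .inl (by rw [hconn.dist_eq_zero_iff.mp h])
    · exact .inr (dist_eq_one_iff_adj.mp h)
    · exact .inl (htwin v h)
  rcases hclass u with hu | hu <;> rcases hclass v with hv | hv
  · exact dist_le_two_of_adj_adj (hadj_of_twin hu haw) (hadj_of_twin hv haw).symm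
  · exact (dist_eq_one_iff_adj.mpr (hadj_of_twin hu hv)).trans_le one_le_two
  · exact (dist_eq_one_iff_adj.mpr (hadj_of_twin hv hu).symm).trans_le one_le_two
  · exact dist_le_two_of_adj_adj hu.symm hv

end SimpleGraph

namespace IsBipartition

variable {V : Type*} {Γ : SimpleGraph V} {B : Set V} {x y : V}

theorem mem_compl_of_adj (hbip : IsBipartition Γ B) (h : Γ.Adj x y) (hx : x ∈ B) : y ∈ Bᶜ :=
  (hbip x y h).1 hx

theorem mem_of_adj (hbip : IsBipartition Γ B) (h : Γ.Adj x y) (hx : x ∈ Bᶜ) : y ∈ B :=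
  by_contra fun hy => hx ((hbip x y h).2 hy)

theorem not_adj_of_mem_compl (hbip : IsBipartition Γ B) (hx : x ∈ Bᶜ) (hy : y ∈ Bᶜ) :
    ¬ Γ.Adj x y :=
  fun h => hy (hbip.mem_of_adj h hx)

theorem even_length_iff (hbip : IsBipartition Γ B) {u v : V} (p : Γ.Walk u v) :
    Even p.length ↔ (u ∈ B ↔ v ∈ B) := by
  induction p with
  | nil => simp
  | cons h p ih =>
    have := hbip _ _ h
    simp only [Walk.length_cons, Nat.even_add_one, ih]
    tauto

theorem even_dist_iff (hbip : IsBipartition Γ B) (hconn : Γ.Connected) (u v : V) :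
    Even (Γ.dist u v) ↔ (u ∈ B ↔ v ∈ B) := by
  obtain ⟨p, hp⟩ := hconn.exists_walk_length_eq_dist u v
  rw [← hp, hbip.even_length_iff]

theorem even_dist_of_mem_compl (hbip : IsBipartition Γ B) (hconn : Γ.Connected)
    (hx : x ∈ Bᶜ) (hy : y ∈ Bᶜ) : Even (Γ.dist x y) :=
  (hbip.even_dist_iff hconn x y).mpr (iff_of_false hx hy)

end IsBipartition

namespace IsGraphAut

variable {V : Type*} {Γ : SimpleGraph V} {g : Equiv.Perm V}

theorem inv (hg : IsGraphAut Γ g) : IsGraphAut Γ g⁻¹ := fun u v => by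
  simpa using (hg (g⁻¹ u) (g⁻¹ v)).symm

theorem neighborSet_apply (hg : IsGraphAut Γ g) (v : V) :
    Γ.neighborSet (g v) = g '' Γ.neighborSet v := by
  ext w
  rw [Equiv.image_eq_preimage_symm, Set.mem_preimage, SimpleGraph.mem_neighborSet,
    SimpleGraph.mem_neighborSet, ← hg v, Equiv.apply_symm_apply]

theorem dist_le (hconn : Γ.Connected) (hg : IsGraphAut Γ g) (u v : V) :
    Γ.dist (g u) (g v) ≤ Γ.dist u v := by
  obtain ⟨p, hp⟩ := hconn.exists_walk_length_eq_dist u v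
  let φ : Γ →g Γ := ⟨g, (hg _ _).2⟩
  have := Γ.dist_le (p.map φ)
  rwa [Walk.length_map, hp] at this

theorem dist_eq (hconn : Γ.Connected) (hg : IsGraphAut Γ g) (u v : V) :
    Γ.dist (g u) (g v) = Γ.dist u v :=
  (hg.dist_le hconn u v).antisymm (by simpa using hg.inv.dist_le hconn (g u) (g v))

theorem mem_iff_mem_iff {B : Set V} (hconn : Γ.Connected) (hbip : IsBipartition Γ B)
    (hg : IsGraphAut Γ g) (u v : V) : (g u ∈ B ↔ g v ∈ B) ↔ (u ∈ B ↔ v ∈ B) := by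
  rw [← hbip.even_dist_iff hconn, ← hbip.even_dist_iff hconn, hg.dist_eq hconn]

theorem eq_one_of_forall_apply_eq
    (htwin : ∀ a a' : V, Γ.neighborSet a = Γ.neighborSet a' → a = a') (hg : IsGraphAut Γ g)
    {S : Set V} (hS : ∀ v ∉ S, Γ.neighborSet v ⊆ S) (hfix : ∀ x ∈ S, g x = x) : g = 1 := by
  ext v
  by_cases hv : v ∈ S
  · exact hfix v hv
  · refine htwin _ _ ?_
    rw [hg.neighborSet_apply]
    exact Set.EqOn.image_eq_self fun w hw => hfix w (hS v hv hw)

end IsGraphAut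

section POrbit

variable {V : Type*} {G N : Subgroup (Equiv.Perm V)} {x y : V}

theorem POrbit_eq_orbit (N : Subgroup (Equiv.Perm V)) (x : V) :
    POrbit N x = MulAction.orbit N x := by
  ext y
  simp [POrbit, MulAction.mem_orbit_iff, Subgroup.smul_def, Equiv.Perm.smul_def]

theorem POrbit_eq_iff : POrbit N x = POrbit N y ↔ x ∈ POrbit N y := by
  simp only [POrbit_eq_orbit, MulAction.orbit_eq_iff]

theorem mem_POrbit_self (x : V) : x ∈ POrbit N x :=
  ⟨1, N.one_mem, rfl⟩

theorem POrbit_apply {n : Equiv.Perm V} (hn : n ∈ N) (x : V) : POrbit N (n x) = POrbit N x :=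
  POrbit_eq_iff.2 ⟨n, hn, rfl⟩

theorem image_POrbit (hnorm : ∀ g ∈ G, ∀ n ∈ N, g * n * g⁻¹ ∈ N) {g : Equiv.Perm V}
    (hg : g ∈ G) (x : V) : (fun z => g z) '' POrbit N x = POrbit N (g x) := by
  ext w
  constructor
  · rintro ⟨_, ⟨n, hn, rfl⟩, rfl⟩
    exact ⟨g * n * g⁻¹, hnorm g hg n hn, by simp⟩
  · rintro ⟨m, hm, rfl⟩
    refine ⟨(g⁻¹ * m * g) x, ⟨g⁻¹ * m * g, ?_, rfl⟩, by simp⟩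
    simpa using hnorm g⁻¹ (G.inv_mem hg) m hm

theorem POrbit_apply_eq (hnorm : ∀ g ∈ G, ∀ n ∈ N, g * n * g⁻¹ ∈ N) {g : Equiv.Perm V}
    (hg : g ∈ G) (h : POrbit N x = POrbit N y) : POrbit N (g x) = POrbit N (g y) := by
  rw [← image_POrbit hnorm hg, ← image_POrbit hnorm hg, h]

end POrbit

namespace LocallyDistTrans

open SimpleGraph

variable {V : Type*} {Γ : SimpleGraph V} {G N : Subgroup (Equiv.Perm V)} {s : ℕ} {v : V}

theorem suborbit_eq (hconn : Γ.Connected) (hGaut : ∀ g ∈ G, IsGraphAut Γ g)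
    (hldt : LocallyDistTrans Γ G s) {c : V} (hc : Γ.dist v c ≤ s) :
    {d | ∃ g ∈ G, g v = v ∧ g c = d} = {d | Γ.dist v d = Γ.dist v c} := by
  ext d
  constructor
  · rintro ⟨g, hg, hgv, rfl⟩
    rw [Set.mem_ofPred_eq, ← hgv, (hGaut g hg).dist_eq hconn, hgv]
  · intro hd
    rcases Nat.eq_zero_or_pos (Γ.dist v c) with h0 | hpos
    · rw [Set.mem_ofPred_eq, h0, hconn.dist_eq_zero_iff] at hd
      rw [hconn.dist_eq_zero_iff] at h0
      exact ⟨1, G.one_mem, rfl, by simp [← h0, ← hd]⟩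
    · exact hldt.2 v c d _ hpos hc rfl hd

theorem ncard_suborbits (hconn : Γ.Connected) (hGaut : ∀ g ∈ G, IsGraphAut Γ g)
    (hldt : LocallyDistTrans Γ G s) {A : Set V} (hA : ∀ c ∈ A, Γ.dist v c ≤ s) :
    {S : Set V | ∃ c ∈ A, S = {d | ∃ g ∈ G, g v = v ∧ g c = d}}.ncard =
      (Γ.dist v '' A).ncard := by
  have hset : {S : Set V | ∃ c ∈ A, S = {d | ∃ g ∈ G, g v = v ∧ g c = d}} =
      (fun i => {d | Γ.dist v d = i}) '' (Γ.dist v '' A) := by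
    ext S
    simp only [Set.mem_ofPred_eq, Set.image_image, Set.mem_image]
    exact ⟨fun ⟨c, hc, hS⟩ => ⟨c, hc, by rw [hS, hldt.suborbit_eq hconn hGaut (hA c hc)]⟩,
      fun ⟨c, hc, hS⟩ => ⟨c, hc, by rw [← hS, hldt.suborbit_eq hconn hGaut (hA c hc)]⟩⟩
  rw [hset]
  refine Set.InjOn.ncard_image ?_
  rintro _ ⟨c, -, rfl⟩ _ ⟨c', -, rfl⟩ h
  exact (Set.ext_iff.mp h c).mp rfl

theorem eq_of_neighborSet_eq (hconn : Γ.Connected) (hGaut : ∀ g ∈ G, IsGraphAut Γ g)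
    (hldt : LocallyDistTrans Γ G s) (hs : 3 ≤ s) {a a' : V}
    (h : Γ.neighborSet a = Γ.neighborSet a') : a = a' := by
  by_contra hne
  have : Nontrivial V := ⟨a, a', hne⟩
  obtain ⟨w, haw⟩ := hconn.exists_adj a
  have hnadj : ¬ Γ.Adj a a' := fun h' => Γ.loopless.irrefl a' (by
    rw [← mem_neighborSet, ← h]
    exact h')
  have hwa' : Γ.Adj w a' := by
    rw [adj_comm, ← mem_neighborSet, ← h]
    exact haw
  have htwin : ∀ c, Γ.dist a c = 2 → Γ.neighborSet c = Γ.neighborSet a := by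
    intro c hc
    obtain ⟨g, hg, hga, rfl⟩ :=
      hldt.2 a a' c 2 one_le_two (by omega) (dist_eq_two_of_adj_adj hne hnadj haw hwa') hc
    rw [(hGaut g hg).neighborSet_apply, ← h, ← (hGaut g hg).neighborSet_apply, hga]
  obtain ⟨u, v, huv⟩ := hconn.exists_le_dist (hs.trans hldt.1)
  have := hconn.dist_le_two_of_forall_twin haw htwin u v
  omega

theorem POrbit_eq_of_dist_eq (hnorm : ∀ g ∈ G, ∀ n ∈ N, g * n * g⁻¹ ∈ N)
    (hldt : LocallyDistTrans Γ G s) {i : ℕ} (hi : 1 ≤ i) (his : i ≤ s) {c d : V}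
    (hc : Γ.dist v c = i) (hcv : POrbit N c = POrbit N v) (hd : Γ.dist v d = i) :
    POrbit N d = POrbit N v := by
  obtain ⟨g, hg, hgv, rfl⟩ := hldt.2 v c d i hi his hc hd
  rw [POrbit_apply_eq hnorm hg hcv, hgv]

end LocallyDistTrans

namespace IsStarlike

open SimpleGraph

variable {V : Type*} {Γ : SimpleGraph V} {B : Set V} {G N : Subgroup (Equiv.Perm V)} {r : ℕ}

theorem exists_POrbit_notMem (hstar : IsStarlike Γ B N r) {𝓢 : Set (Set V)}
    (h𝓢 : 𝓢.Finite) (hr : 𝓢.ncard < r) : ∃ d ∈ Bᶜ, POrbit N d ∉ 𝓢 := by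
  by_contra! h
  have hsub : {S : Set V | ∃ x ∈ Bᶜ, S = POrbit N x} ⊆ 𝓢 := by
    rintro _ ⟨x, hx, rfl⟩
    exact h x hx
  have := Set.ncard_le_ncard hsub h𝓢
  rw [hstar.2.2] at this
  omega

theorem mem_compl_of_POrbit_eq (hstar : IsStarlike Γ B N r) {b c : V} (hb : b ∈ Bᶜ)
    (h : POrbit N c = POrbit N b) : c ∈ Bᶜ := by
  obtain ⟨n, hn, rfl⟩ := POrbit_eq_iff.mp h
  exact fun hnb => hb ((hstar.1 n hn b).mp hnb)

theorem exists_adj_POrbit_eq [Nontrivial V] (hstar : IsStarlike Γ B N r)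
    (hconn : Γ.Connected) (hbip : IsBipartition Γ B) (hNaut : ∀ n ∈ N, IsGraphAut Γ n)
    {x c : V} (hx : x ∈ B) (hc : c ∈ Bᶜ) : ∃ e, Γ.Adj x e ∧ POrbit N e = POrbit N c := by
  obtain ⟨y, hcy⟩ := hconn.exists_adj c
  obtain ⟨n, hn, rfl⟩ := hstar.2.1 y (hbip.mem_of_adj hcy hc) x hx
  exact ⟨n c, (hNaut n hn y c).mpr hcy.symm, POrbit_apply hn c⟩

theorem map_mem_iff (hstar : IsStarlike Γ B N r) (hr : 1 < r) (hconn : Γ.Connected)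
    (hbip : IsBipartition Γ B) (hGaut : ∀ g ∈ G, IsGraphAut Γ g)
    (hnorm : ∀ g ∈ G, ∀ n ∈ N, g * n * g⁻¹ ∈ N) : ∀ g ∈ G, ∀ v : V, g v ∈ B ↔ v ∈ B := by
  intro g hg
  obtain ⟨v₀⟩ := hconn.nonempty
  have key := (hGaut g hg).mem_iff_mem_iff hconn hbip v₀
  by_cases h₀ : g v₀ ∈ B ↔ v₀ ∈ B
  · intro v
    have := key v
    tauto
  · -- `g` would swap the biparts, and then the conjugate `g N g⁻¹ = N` would be transitive on `Bᶜ`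
    have hswap : ∀ v, g v ∈ B ↔ v ∉ B := fun v => by
      have := key v
      tauto
    have hmem : ∀ c ∈ Bᶜ, g⁻¹ c ∈ B := fun c hc => by
      have := hswap (g⁻¹ c)
      simp only [Equiv.Perm.coe_inv, Equiv.apply_symm_apply] at this
      tauto
    obtain ⟨b, hb, -⟩ := hstar.exists_POrbit_notMem Set.finite_empty (by simp; omega)
    obtain ⟨d, hd, hdb⟩ :=
      hstar.exists_POrbit_notMem (Set.finite_singleton (POrbit N b)) (by simpa using hr)
    obtain ⟨n, hn, hnd⟩ := hstar.2.1 _ (hmem b hb) _ (hmem d hd)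
    refine absurd (POrbit_eq_iff.mpr ⟨g * n * g⁻¹, hnorm g hg n hn, ?_⟩) hdb
    rw [Equiv.Perm.mul_apply, Equiv.Perm.mul_apply, hnd]
    simp

theorem exists_apply_eq_of_mem_compl [Nontrivial V] (hstar : IsStarlike Γ B N r)
    (hconn : Γ.Connected) (hbip : IsBipartition Γ B) (hGaut : ∀ g ∈ G, IsGraphAut Γ g)
    (hNG : N ≤ G) {s : ℕ} (hldt : LocallyDistTrans Γ G s) (hs : 1 ≤ s) {b c : V}
    (hb : b ∈ Bᶜ) (hc : c ∈ Bᶜ) : ∃ g ∈ G, g b = c := by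
  obtain ⟨x, hbx⟩ := hconn.exists_adj b
  obtain ⟨y, hcy⟩ := hconn.exists_adj c
  obtain ⟨n, hn, rfl⟩ := hstar.2.1 x (hbip.mem_of_adj hbx hb) y (hbip.mem_of_adj hcy hc)
  have hnb : Γ.Adj (n x) (n b) := (hGaut n (hNG hn) x b).mpr hbx.symm
  obtain ⟨g, hg, -, hgb⟩ := hldt.2 (n x) (n b) c 1 le_rfl hs (dist_eq_one_iff_adj.mpr hnb)
    (dist_eq_one_iff_adj.mpr hcy.symm)
  exact ⟨g * n, G.mul_mem hg (hNG hn), hgb⟩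

end IsStarlike

structure StarlikeLDT {V : Type*} (Γ : SimpleGraph V) (B : Set V) (G N : Subgroup (Equiv.Perm V))
    (r : ℕ) : Prop where
  connected : Γ.Connected
  bipartition : IsBipartition Γ B
  aut : ∀ g ∈ G, IsGraphAut Γ g
  le : N ≤ G
  normal : ∀ g ∈ G, ∀ n ∈ N, g * n * g⁻¹ ∈ N
  three_le : 3 ≤ r
  starlike : IsStarlike Γ B N r
  ldt : LocallyDistTrans Γ G 4

namespace StarlikeLDT

open SimpleGraph IsBipartition

variable {V : Type*} {Γ : SimpleGraph V} {B : Set V} {G N : Subgroup (Equiv.Perm V)} {r : ℕ}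
  {x y b c : V}

theorem nontrivial (h : StarlikeLDT Γ B G N r) : Nontrivial V :=
  Γ.nontrivial_of_diam_ne_zero (by have := h.ldt.1; omega)

theorem map_mem_iff (h : StarlikeLDT Γ B G N r) : ∀ g ∈ G, ∀ v : V, g v ∈ B ↔ v ∈ B :=
  h.starlike.map_mem_iff (by have := h.three_le; omega) h.connected h.bipartition h.aut h.normal

theorem exists_apply_eq_of_mem_compl (h : StarlikeLDT Γ B G N r) (hb : b ∈ Bᶜ) (hc : c ∈ Bᶜ) :
    ∃ g ∈ G, g b = c :=
  have := h.nontrivial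
  h.starlike.exists_apply_eq_of_mem_compl h.connected h.bipartition h.aut h.le h.ldt
    (by norm_num) hb hc

theorem exists_POrbit_ne (h : StarlikeLDT Γ B G N r) (x y : V) :
    ∃ d ∈ Bᶜ, POrbit N d ≠ POrbit N x ∧ POrbit N d ≠ POrbit N y := by
  obtain ⟨d, hd, hdxy⟩ := h.starlike.exists_POrbit_notMem (Set.toFinite {POrbit N x, POrbit N y})
    ((Set.ncard_insert_le _ _).trans_lt (by have := h.three_le; simp; omega))
  simp only [Set.mem_insert_iff, Set.mem_singleton_iff, not_or] at hdxy
  exact ⟨d, hd, hdxy⟩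

theorem exists_adj_POrbit_eq (h : StarlikeLDT Γ B G N r) (hx : x ∈ B) (hc : c ∈ Bᶜ) :
    ∃ e, Γ.Adj x e ∧ POrbit N e = POrbit N c :=
  have := h.nontrivial
  h.starlike.exists_adj_POrbit_eq h.connected h.bipartition (fun n hn => h.aut n (h.le hn)) hx hc

/-- A common point of `b` and `c` also lies on a block of another class, at distance `2` from
`b`; but `G_b` preserves the class of `b` and is transitive on `Γ₂(b)`. -/
theorem dist_ne_two_of_POrbit_eq (h : StarlikeLDT Γ B G N r) (hb : b ∈ Bᶜ)
    (hcb : POrbit N c = POrbit N b) : Γ.dist b c ≠ 2 := by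
  intro h2
  obtain ⟨x, -, hbx⟩ := h.connected.exists_adj_dist_eq (k := 1) h2
  rw [dist_eq_one_iff_adj] at hbx
  have hx := h.bipartition.mem_of_adj hbx hb
  obtain ⟨d, hd, hdb, -⟩ := h.exists_POrbit_ne b b
  obtain ⟨e, hxe, hed⟩ := h.exists_adj_POrbit_eq hx hd
  have heb : POrbit N e ≠ POrbit N b := hed ▸ hdb
  have hbe : Γ.dist b e = 2 := dist_eq_two_of_adj_adj (by rintro rfl; exact heb rfl)
    (h.bipartition.not_adj_of_mem_compl hb (h.bipartition.mem_compl_of_adj hxe hx)) hbx hxe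
  exact heb (h.ldt.POrbit_eq_of_dist_eq h.normal one_le_two (by norm_num) h2 hcb hbe)

theorem eq_of_adj_of_POrbit_eq (h : StarlikeLDT Γ B G N r) (hx : x ∈ B) (hxb : Γ.Adj x b)
    (hxc : Γ.Adj x c) (hcb : POrbit N c = POrbit N b) : b = c := by
  by_contra hne
  have hb := h.bipartition.mem_compl_of_adj hxb hx
  exact h.dist_ne_two_of_POrbit_eq hb hcb (dist_eq_two_of_adj_adj hne
    (h.bipartition.not_adj_of_mem_compl hb (h.bipartition.mem_compl_of_adj hxc hx)) hxb.symm hxc)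

/-- If a block were adjacent to every point then, `G` being transitive on blocks, `Γ` would be
complete bipartite, of diameter at most `2`. -/
theorem exists_not_adj (h : StarlikeLDT Γ B G N r) (hb : b ∈ Bᶜ) : ∃ x ∈ B, ¬ Γ.Adj x b := by
  have := h.nontrivial
  by_contra! hall
  have hadj : ∀ x ∈ B, ∀ c ∈ Bᶜ, Γ.Adj x c := by
    intro x hx c hc
    obtain ⟨g, hg, rfl⟩ := h.exists_apply_eq_of_mem_compl hb hc
    simpa using (h.aut g hg (g⁻¹ x) b).mpr
      (hall _ ((h.map_mem_iff g⁻¹ (G.inv_mem hg) x).mpr hx))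
  obtain ⟨x, hbx⟩ := h.connected.exists_adj b
  obtain ⟨u, v, huv⟩ := h.connected.exists_le_dist (k := 3) (by have := h.ldt.1; omega)
  have := dist_le_two_of_forall_adj hadj ⟨x, h.bipartition.mem_of_adj hbx hb⟩ ⟨b, hb⟩ u v
  omega

theorem exists_POrbit_eq_dist_eq_four (h : StarlikeLDT Γ B G N r) (hb : b ∈ Bᶜ) :
    ∃ c, POrbit N c = POrbit N b ∧ Γ.dist b c = 4 := by
  obtain ⟨x, hx, hxb⟩ := h.exists_not_adj hb
  have hbx : 3 ≤ Γ.dist b x := by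
    have hodd : ¬ Even (Γ.dist b x) := by
      rw [h.bipartition.even_dist_iff h.connected]
      exact fun hbx => hb (hbx.mpr hx)
    have h1 : Γ.dist b x ≠ 1 := fun h1 => hxb (dist_eq_one_iff_adj.mp h1).symm
    obtain ⟨m, hm⟩ := Nat.not_even_iff_odd.mp hodd
    omega
  obtain ⟨y, hy⟩ := h.connected.exists_dist_eq_of_le hbx
  have hyB : y ∈ B := by
    have : ¬ Even (Γ.dist b y) := by rw [hy]; decide
    rw [h.bipartition.even_dist_iff h.connected] at this
    tauto
  obtain ⟨c, hyc, hcb⟩ := h.exists_adj_POrbit_eq hyB hb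
  have hc := h.bipartition.mem_compl_of_adj hyc hyB
  refine ⟨c, hcb, ?_⟩
  have hle := h.connected.dist_triangle (u := b) (v := y) (w := c)
  rw [hy, dist_eq_one_iff_adj.mpr hyc] at hle
  have h0 : Γ.dist b c ≠ 0 := by
    rw [Ne, h.connected.dist_eq_zero_iff]
    rintro rfl
    rw [dist_comm, dist_eq_one_iff_adj.mpr hyc] at hy
    omega
  have h2 := h.dist_ne_two_of_POrbit_eq hb hcb
  obtain ⟨m, hm⟩ := h.bipartition.even_dist_of_mem_compl h.connected hb hc
  omega

theorem POrbit_eq_of_dist_eq_four (h : StarlikeLDT Γ B G N r) (hb : b ∈ Bᶜ)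
    (hbc : Γ.dist b c = 4) : POrbit N c = POrbit N b := by
  obtain ⟨c', hc'b, hbc'⟩ := h.exists_POrbit_eq_dist_eq_four hb
  exact h.ldt.POrbit_eq_of_dist_eq h.normal (by norm_num) le_rfl hbc' hc'b hbc

theorem dist_eq_two_of_dist_le_four (h : StarlikeLDT Γ B G N r) (hb : b ∈ Bᶜ) (hc : c ∈ Bᶜ)
    (hcb : POrbit N c ≠ POrbit N b) (hbc : Γ.dist b c ≤ 4) : Γ.dist b c = 2 := by
  have h0 : Γ.dist b c ≠ 0 := by
    rw [Ne, h.connected.dist_eq_zero_iff]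
    rintro rfl
    exact hcb rfl
  have h4 : Γ.dist b c ≠ 4 := fun h4 => hcb (h.POrbit_eq_of_dist_eq_four hb h4)
  obtain ⟨m, hm⟩ := h.bipartition.even_dist_of_mem_compl h.connected hb hc
  omega

/-- For `c` at distance `4` from `b`: a block `e` through a point `x` next to `b` on a geodesic
to `c`, taken in a class other than those of `b` and `c'`, meets both `c` and `c'`. -/
theorem dist_le_four_of_dist_le_two (h : StarlikeLDT Γ B G N r) {c' : V} (hb : b ∈ Bᶜ)
    (hc : c ∈ Bᶜ) (hc' : c' ∈ Bᶜ) (hbc : Γ.dist b c ≤ 4) (hcc' : Γ.dist c c' ≤ 2) :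
    Γ.dist b c' ≤ 4 := by
  have hconn := h.connected
  have hbc'_le := hconn.dist_triangle (u := b) (v := c) (w := c')
  obtain hbc | hbc : Γ.dist b c ≤ 2 ∨ Γ.dist b c = 4 := by
    obtain ⟨m, hm⟩ := h.bipartition.even_dist_of_mem_compl hconn hb hc
    omega
  · omega
  have hcb := h.POrbit_eq_of_dist_eq_four hb hbc
  obtain ⟨x, hxb, hcx⟩ := hconn.exists_adj_dist_eq (u := c) (v := b) (k := 3)
    (by rw [dist_comm, hbc])
  have hx := h.bipartition.mem_of_adj hxb.symm hb
  obtain ⟨d, hd, hdb, hdc'⟩ := h.exists_POrbit_ne b c'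
  obtain ⟨e, hxe, hed⟩ := h.exists_adj_POrbit_eq hx hd
  have he := h.bipartition.mem_compl_of_adj hxe hx
  have hec : Γ.dist e c = 2 := by
    refine h.dist_eq_two_of_dist_le_four he hc (by rw [hcb, hed]; exact hdb.symm) ?_
    have := hconn.dist_triangle (u := e) (v := x) (w := c)
    rw [dist_eq_one_iff_adj.mpr hxe.symm, dist_comm (u := x), hcx] at this
    exact this
  have hec' : Γ.dist e c' = 2 := by
    refine h.dist_eq_two_of_dist_le_four he hc' (by rw [hed]; exact hdc'.symm) ?_
    have := hconn.dist_triangle (u := e) (v := c) (w := c')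
    omega
  have := hconn.dist_triangle (u := b) (v := e) (w := c')
  have := dist_le_two_of_adj_adj hxb.symm hxe
  omega

theorem dist_le_four (h : StarlikeLDT Γ B G N r) (hb : b ∈ Bᶜ) (hc : c ∈ Bᶜ) :
    Γ.dist b c ≤ 4 := by
  obtain ⟨p, -⟩ := h.connected.exists_walk_length_eq_dist b c
  refine Walk.mem_of_even_length (S := {z | z ∈ Bᶜ → Γ.dist b z ≤ 4}) ?_ p (by simp)
    ((h.bipartition.even_length_iff p).mpr (iff_of_false hb hc)) hc
  intro z y z' hz hzy hyz' hz'
  have hzB : z ∈ Bᶜ :=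
    h.bipartition.mem_compl_of_adj hzy.symm (h.bipartition.mem_of_adj hyz'.symm hz')
  exact h.dist_le_four_of_dist_le_two hb hzB hz' (hz hzB) (dist_le_two_of_adj_adj hzy hyz')

theorem dist_eq_two_of_POrbit_ne (h : StarlikeLDT Γ B G N r) (hb : b ∈ Bᶜ) (hc : c ∈ Bᶜ)
    (hcb : POrbit N c ≠ POrbit N b) : Γ.dist b c = 2 :=
  h.dist_eq_two_of_dist_le_four hb hc hcb (h.dist_le_four hb hc)

theorem dist_eq_four_of_POrbit_eq (h : StarlikeLDT Γ B G N r) (hb : b ∈ Bᶜ)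
    (hcb : POrbit N c = POrbit N b) (hne : c ≠ b) : Γ.dist b c = 4 := by
  have hc := h.starlike.mem_compl_of_POrbit_eq hb hcb
  have h0 : Γ.dist b c ≠ 0 := by
    rw [Ne, h.connected.dist_eq_zero_iff]
    exact hne.symm
  have h2 := h.dist_ne_two_of_POrbit_eq hb hcb
  have h4 := h.dist_le_four hb hc
  obtain ⟨m, hm⟩ := h.bipartition.even_dist_of_mem_compl h.connected hb hc
  omega

theorem image_dist_compl (h : StarlikeLDT Γ B G N r) (hb : b ∈ Bᶜ) :
    Γ.dist b '' Bᶜ = {0, 2, 4} := by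
  ext i
  simp only [Set.mem_image, Set.mem_insert_iff, Set.mem_singleton_iff]
  constructor
  · rintro ⟨c, hc, rfl⟩
    by_cases hcb : c = b
    · simp [hcb]
    by_cases hcb' : POrbit N c = POrbit N b
    · exact .inr (.inr (h.dist_eq_four_of_POrbit_eq hb hcb' hcb))
    · exact .inr (.inl (h.dist_eq_two_of_POrbit_ne hb hc hcb'))
  · rintro (rfl | rfl | rfl)
    · exact ⟨b, hb, dist_self⟩
    · obtain ⟨d, hd, hdb, -⟩ := h.exists_POrbit_ne b b
      exact ⟨d, hd, h.dist_eq_two_of_POrbit_ne hb hd hdb⟩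
    · obtain ⟨c, hcb, hc⟩ := h.exists_POrbit_eq_dist_eq_four hb
      exact ⟨c, h.starlike.mem_compl_of_POrbit_eq hb hcb, hc⟩

theorem dist_le_four_of_mem (h : StarlikeLDT Γ B G N r) (hx : x ∈ B) (hy : y ∈ B) :
    Γ.dist x y ≤ 4 := by
  have := h.nontrivial
  obtain ⟨b, hxb⟩ := h.connected.exists_adj x
  have hb := h.bipartition.mem_compl_of_adj hxb hx
  obtain ⟨d, hd, hdb, -⟩ := h.exists_POrbit_ne b b
  obtain ⟨c, hyc, hcd⟩ := h.exists_adj_POrbit_eq hy hd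
  have hbc := h.dist_eq_two_of_POrbit_ne hb (h.bipartition.mem_compl_of_adj hyc hy) (hcd ▸ hdb)
  have hxc := h.connected.dist_triangle (u := x) (v := b) (w := c)
  have hxy := h.connected.dist_triangle (u := x) (v := c) (w := y)
  rw [dist_eq_one_iff_adj.mpr hxb, hbc] at hxc
  rw [dist_eq_one_iff_adj.mpr hyc.symm] at hxy
  omega

theorem image_dist_mem (h : StarlikeLDT Γ B G N r) (hx : x ∈ B) :
    Γ.dist x '' B = {0, 2} ∨ Γ.dist x '' B = {0, 2, 4} := by
  have hsub : Γ.dist x '' B ⊆ {0, 2, 4} := by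
    rintro _ ⟨y, hy, rfl⟩
    have := h.dist_le_four_of_mem hx hy
    obtain ⟨m, hm⟩ := (h.bipartition.even_dist_iff h.connected x y).mpr (iff_of_true hx hy)
    simp only [Set.mem_insert_iff, Set.mem_singleton_iff]
    omega
  have h2 : 2 ∈ Γ.dist x '' B := by
    obtain ⟨y, hy⟩ := h.connected.exists_dist_eq_of_two_mul_le_diam (k := 2) h.ldt.1 x
    refine ⟨y, ?_, hy⟩
    have := (h.bipartition.even_dist_iff h.connected x y).mp (by rw [hy]; decide)
    exact this.mp hx
  have h0 : 0 ∈ Γ.dist x '' B := ⟨x, hx, dist_self⟩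
  by_cases h4 : 4 ∈ Γ.dist x '' B
  · exact .inr (hsub.antisymm (by simp [Set.insert_subset_iff, h0, h2, h4]))
  · refine .inl (Set.Subset.antisymm (fun i hi => ?_) (by simp [Set.insert_subset_iff, h0, h2]))
    rcases hsub hi with rfl | rfl | rfl
    · simp
    · simp
    · exact absurd hi h4

theorem rank_mem (h : StarlikeLDT Γ B G N r) (hx : x ∈ B) :
    {S : Set V | ∃ y ∈ B, S = {z | ∃ g ∈ G, g x = x ∧ g y = z}}.ncard ∈ ({2, 3} : Set ℕ) := by
  rw [h.ldt.ncard_suborbits h.connected h.aut fun y hy => h.dist_le_four_of_mem hx hy]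
  rcases h.image_dist_mem hx with hD | hD <;> simp [hD]

theorem rank_compl (h : StarlikeLDT Γ B G N r) (hb : b ∈ Bᶜ) :
    {S : Set V | ∃ c ∈ Bᶜ, S = {d | ∃ g ∈ G, g b = b ∧ g c = d}}.ncard = 3 := by
  rw [h.ldt.ncard_suborbits h.connected h.aut fun c hc => h.dist_le_four hb hc,
    h.image_dist_compl hb]
  simp

theorem eq_one_of_forall_mem (h : StarlikeLDT Γ B G N r) {g : Equiv.Perm V} (hg : g ∈ G)
    (hfix : ∀ x ∈ B, g x = x) : g = 1 :=
  (h.aut g hg).eq_one_of_forall_apply_eq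
    (fun _ _ => h.ldt.eq_of_neighborSet_eq h.connected h.aut (by norm_num))
    (fun _ hv _ hw => h.bipartition.mem_of_adj hw hv) hfix

theorem eq_one_of_forall_mem_compl (h : StarlikeLDT Γ B G N r) {g : Equiv.Perm V} (hg : g ∈ G)
    (hfix : ∀ x ∈ Bᶜ, g x = x) : g = 1 :=
  (h.aut g hg).eq_one_of_forall_apply_eq
    (fun _ _ => h.ldt.eq_of_neighborSet_eq h.connected h.aut (by norm_num))
    (fun _ hv _ hw => h.bipartition.mem_compl_of_adj hw (not_not.mp hv)) hfix

theorem imprimitive [Finite V] (h : StarlikeLDT Γ B G N r) :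
    ∃ 𝓟 : Set (Set V), (∀ C ∈ 𝓟, C ⊆ Bᶜ ∧ 2 ≤ C.ncard) ∧ 2 ≤ 𝓟.ncard ∧
      (∀ b ∈ Bᶜ, ∃! C, C ∈ 𝓟 ∧ b ∈ C) ∧
      (∀ g ∈ G, ∀ C ∈ 𝓟, (fun z => g z) '' C ∈ 𝓟) := by
  refine ⟨{S | ∃ x ∈ Bᶜ, S = POrbit N x}, ?_, ?_, ?_, ?_⟩
  · rintro _ ⟨b, hb, rfl⟩
    refine ⟨fun c hc => h.starlike.mem_compl_of_POrbit_eq hb (POrbit_eq_iff.mpr hc), ?_⟩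
    obtain ⟨c, hcb, hc⟩ := h.exists_POrbit_eq_dist_eq_four hb
    have hne : b ≠ c := by
      rintro rfl
      simp at hc
    calc 2 = ({b, c} : Set V).ncard := (Set.ncard_pair hne).symm
      _ ≤ (POrbit N b).ncard := Set.ncard_le_ncard
          (Set.insert_subset (mem_POrbit_self b)
            (Set.singleton_subset_iff.mpr (POrbit_eq_iff.mp hcb)))
  · rw [h.starlike.2.2]
    have := h.three_le
    omega
  · intro b hb
    refine ⟨POrbit N b, ⟨⟨b, hb, rfl⟩, mem_POrbit_self b⟩, ?_⟩
    rintro _ ⟨⟨c, -, rfl⟩, hbc⟩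
    exact (POrbit_eq_iff.mpr hbc).symm
  · rintro g hg _ ⟨b, hb, rfl⟩
    exact ⟨g b, fun hgb => hb ((h.map_mem_iff g hg b).mp hgb), image_POrbit h.normal hg b⟩

theorem ncard_neighborSet (h : StarlikeLDT Γ B G N r) (hx : x ∈ B) :
    (Γ.neighborSet x).ncard = r := by
  have hinj : Set.InjOn (POrbit N) (Γ.neighborSet x) :=
    fun _ hb _ hc hbc => h.eq_of_adj_of_POrbit_eq hx hb hc hbc.symm
  rw [← hinj.ncard_image, ← h.starlike.2.2]
  congr 1
  ext S
  constructor
  · rintro ⟨b, hb, rfl⟩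
    exact ⟨b, h.bipartition.mem_compl_of_adj hb hx, rfl⟩
  · rintro ⟨c, hc, rfl⟩
    exact h.exists_adj_POrbit_eq hx hc

/-- The stabiliser of `y` is transitive on `Γ₂(y)`, which contains the other neighbours of
`x`; an element of `N` then brings back `x`, and it fixes `y` and `z'` because each is the
only neighbour of `x` in its class. -/
theorem exists_fix_fix_apply_eq (h : StarlikeLDT Γ B G N r) {z z' : V} (hx : x ∈ B)
    (hxy : Γ.Adj x y) (hxz : Γ.Adj x z) (hxz' : Γ.Adj x z') (hzy : z ≠ y) (hz'y : z' ≠ y) :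
    ∃ g ∈ G, g x = x ∧ g y = y ∧ g z = z' := by
  have hy := h.bipartition.mem_compl_of_adj hxy hx
  have hdist : ∀ {w}, Γ.Adj x w → w ≠ y → Γ.dist y w = 2 := fun hxw hwy =>
    h.dist_eq_two_of_POrbit_ne hy (h.bipartition.mem_compl_of_adj hxw hx)
      fun hwy' => hwy (h.eq_of_adj_of_POrbit_eq hx hxy hxw hwy').symm
  obtain ⟨g, hg, hgy, hgz⟩ :=
    h.ldt.2 y z z' 2 one_le_two (by norm_num) (hdist hxz hzy) (hdist hxz' hz'y)
  obtain ⟨n, hn, hnx⟩ := h.starlike.2.1 (g x) ((h.map_mem_iff g hg x).mpr hx) x hx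
  have hng : n * g ∈ G := G.mul_mem (h.le hn) hg
  have hmap : ∀ {w w'}, Γ.Adj x w → Γ.Adj x w' → g w = w' → (n * g) w = w' := by
    intro w w' hxw hxw' hgw
    have hadj : Γ.Adj x ((n * g) w) := by
      simpa [hnx] using (h.aut _ hng x w).mpr hxw
    refine (h.eq_of_adj_of_POrbit_eq hx hxw' hadj ?_).symm
    rw [Equiv.Perm.mul_apply, hgw, POrbit_apply hn]
  exact ⟨n * g, hng, hnx, hmap hxy hxy hgy, hmap hxz hxz' hgz⟩

theorem two_transitive (h : StarlikeLDT Γ B G N r) (hx : x ∈ B) :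
    ∀ y ∈ Γ.neighborSet x, ∀ z ∈ Γ.neighborSet x, ∀ y' ∈ Γ.neighborSet x,
      ∀ z' ∈ Γ.neighborSet x, y ≠ z → y' ≠ z' → ∃ g ∈ G, g x = x ∧ g y = y' ∧ g z = z' := by
  intro y hy z hz y' hy' z' hz' hyz hy'z'
  obtain ⟨g, hg, hgx, rfl⟩ := h.ldt.2 x y y' 1 le_rfl (by norm_num)
    (dist_eq_one_iff_adj.mpr hy) (dist_eq_one_iff_adj.mpr hy')
  have hxgz : Γ.Adj x (g z) := hgx ▸ (h.aut g hg x z).mpr hz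
  obtain ⟨k, hk, hkx, hky, hkz⟩ := h.exists_fix_fix_apply_eq hx hy' hxgz hz'
    (g.injective.ne hyz.symm) hy'z'.symm
  exact ⟨k * g, G.mul_mem hk hg, by simp [hgx, hkx], by simp [hky], by simp [hkz]⟩

end StarlikeLDT

theorem statement1_general {V : Type*} [Fintype V] (Γ : SimpleGraph V) (B : Set V)
    (hconn : Γ.Connected) (hbip : IsBipartition Γ B)
    (G N : Subgroup (Equiv.Perm V)) (hGaut : ∀ g ∈ G, IsGraphAut Γ g)
    (hNG : N ≤ G) (hnorm : ∀ g ∈ G, ∀ n ∈ N, g * n * g⁻¹ ∈ N)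
    (r : ℕ) (hr : 3 ≤ r)
    (hstar : IsStarlike Γ B N r) (hldt : LocallyDistTrans Γ G 4) :
    -- G acts faithfully on B and on B'
    (∀ g ∈ G, (∀ x ∈ B, g x = x) → g = 1) ∧
    (∀ g ∈ G, (∀ x ∈ Bᶜ, g x = x) → g = 1) ∧
    -- G preserves the biparts
    (∀ g ∈ G, ∀ v : V, g v ∈ B ↔ v ∈ B) ∧
    -- G is transitive on B, of rank 2 or 3
    (∀ x ∈ B, ∀ y ∈ B, ∃ g ∈ G, g x = y) ∧
    (∀ x ∈ B,
      {S : Set V | ∃ y ∈ B, S = {z | ∃ g ∈ G, g x = x ∧ g y = z}}.ncard ∈ ({2, 3} : Set ℕ)) ∧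
    -- G is transitive on B', of rank 3
    (∀ b ∈ Bᶜ, ∀ b' ∈ Bᶜ, ∃ g ∈ G, g b = b') ∧
    (∀ b ∈ Bᶜ,
      {S : Set V | ∃ c ∈ Bᶜ, S = {d | ∃ g ∈ G, g b = b ∧ g c = d}}.ncard = 3) ∧
    -- G is imprimitive on B': it preserves a nontrivial partition of B'
    (∃ 𝓟 : Set (Set V), (∀ C ∈ 𝓟, C ⊆ Bᶜ ∧ 2 ≤ C.ncard) ∧ 2 ≤ 𝓟.ncard ∧
      (∀ b ∈ Bᶜ, ∃! C, C ∈ 𝓟 ∧ b ∈ C) ∧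
      (∀ g ∈ G, ∀ C ∈ 𝓟, (fun z => g z) '' C ∈ 𝓟)) ∧
    -- the stabiliser of x ∈ B is 2-transitive of degree r on Γ(x)
    (∀ x ∈ B, (Γ.neighborSet x).ncard = r ∧
      ∀ y ∈ Γ.neighborSet x, ∀ z ∈ Γ.neighborSet x,
        ∀ y' ∈ Γ.neighborSet x, ∀ z' ∈ Γ.neighborSet x, y ≠ z → y' ≠ z' →
          ∃ g ∈ G, g x = x ∧ g y = y' ∧ g z = z') := by
  have h : StarlikeLDT Γ B G N r := ⟨hconn, hbip, hGaut, hNG, hnorm, hr, hstar, hldt⟩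
  have transitive_B : ∀ x ∈ B, ∀ y ∈ B, ∃ g ∈ G, g x = y := fun x hx y hy =>
    have ⟨n, hn, hnx⟩ := hstar.2.1 x hx y hy
    ⟨n, hNG hn, hnx⟩
  exact ⟨fun _ hg => h.eq_one_of_forall_mem hg, fun _ hg => h.eq_one_of_forall_mem_compl hg,
    h.map_mem_iff, transitive_B, fun _ hx => h.rank_mem hx,
    fun _ hb _ hc => h.exists_apply_eq_of_mem_compl hb hc, fun _ hb => h.rank_compl hb,
    h.imprimitive, fun _ hx => ⟨h.ncard_neighborSet hx, h.two_transitive hx⟩⟩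

/-- **Theorem 2** (Theorem `properties`).  If `Γ`, `G`, `N` satisfy the equivalent
conditions of the main theorem, then `G` acts faithfully on `B` and on `B' = Bᶜ`,
`G` is transitive of rank `2` or `3` on `B`, transitive, imprimitive and of rank `3`
on `Bᶜ`, and for `x ∈ B` the stabiliser `G_x` induces a `2`-transitive group of degree
`r` on the neighbourhood `Γ(x)`. -/
theorem statement1 {V : Type*} [Fintype V] (Γ : SimpleGraph V) (B : Set V)
    (hconn : Γ.Connected) (hbip : IsBipartition Γ B)
    (G N : Subgroup (Equiv.Perm V)) (hGaut : ∀ g ∈ G, IsGraphAut Γ g)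
    (hNG : N ≤ G) (hN1 : N ≠ ⊥) (hnorm : ∀ g ∈ G, ∀ n ∈ N, g * n * g⁻¹ ∈ N)
    (r : ℕ) (hr : 3 ≤ r)
    (hstar : IsStarlike Γ B N r) (hldt : LocallyDistTrans Γ G 4) :
    -- G acts faithfully on B and on B'
    (∀ g ∈ G, (∀ x ∈ B, g x = x) → g = 1) ∧
    (∀ g ∈ G, (∀ x ∈ Bᶜ, g x = x) → g = 1) ∧
    -- G preserves the biparts
    (∀ g ∈ G, ∀ v : V, g v ∈ B ↔ v ∈ B) ∧
    -- G is transitive on B, of rank 2 or 3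
    (∀ x ∈ B, ∀ y ∈ B, ∃ g ∈ G, g x = y) ∧
    (∀ x ∈ B,
      {S : Set V | ∃ y ∈ B, S = {z | ∃ g ∈ G, g x = x ∧ g y = z}}.ncard ∈ ({2, 3} : Set ℕ)) ∧
    -- G is transitive on B', of rank 3
    (∀ b ∈ Bᶜ, ∀ b' ∈ Bᶜ, ∃ g ∈ G, g b = b') ∧
    (∀ b ∈ Bᶜ,
      {S : Set V | ∃ c ∈ Bᶜ, S = {d | ∃ g ∈ G, g b = b ∧ g c = d}}.ncard = 3) ∧
    -- G is imprimitive on B': it preserves a nontrivial partition of B'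
    (∃ 𝓟 : Set (Set V), (∀ C ∈ 𝓟, C ⊆ Bᶜ ∧ 2 ≤ C.ncard) ∧ 2 ≤ 𝓟.ncard ∧
      (∀ b ∈ Bᶜ, ∃! C, C ∈ 𝓟 ∧ b ∈ C) ∧
      (∀ g ∈ G, ∀ C ∈ 𝓟, (fun z => g z) '' C ∈ 𝓟)) ∧
    -- the stabiliser of x ∈ B is 2-transitive of degree r on Γ(x)
    (∀ x ∈ B, (Γ.neighborSet x).ncard = r ∧
      ∀ y ∈ Γ.neighborSet x, ∀ z ∈ Γ.neighborSet x,
        ∀ y' ∈ Γ.neighborSet x, ∀ z' ∈ Γ.neighborSet x, y ≠ z → y' ≠ z' →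
          ∃ g ∈ G, g x = x ∧ g y = y' ∧ g z = z') :=
  statement1_general Γ B hconn hbip G N hGaut hNG hnorm r hr hstar hldt
end

section
/- Let p be a prime, let V = F_p^d be a d-dimensional vector space over the field with p elements, let N be the group of translations of V, let G_0 ≤ GL(V), and let G = N ⋊ G_0 ≤ AGL(V). Assume: (a) G has rank 2 or 3 in its (transitive) action on V; (b) there exists a G_0-orbit M = {M_1, …, M_r} of linear subspaces of V, with r ≥ 3, such that the induced action of G_0 on M is 2-transitive (not necessarily faithful); (c) V = M_1 + M_2; (d) the stabiliser of M_1 in G_0 is transitive on the set of cosets v + M_1 with v ∉ M_1; (e) the union over i of M_i ∖ {0} is a single G_0-orbit. Define the design D with point set V, block set the set of all cosets v + M_i (1 ≤ i ≤ r, v ∈ V), and incidence given by membership. Then G acts as a group of automorphisms of D, D is G-pairwise transitive and N-nicely affine with r parallel classes of blocks, and the incidence graph Γ(D) is r-starlike relative to N and locally (G,4)-distance transitive. -/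
/-!
The affine maps `x ↦ g x + t` (`g ∈ G₀`) permute the cosets `v + Mᵢ`, and after a translation
each pairwise-transitivity condition becomes a statement about `G₀`: flags and intersecting
block pairs follow from the (2-)transitivity of `G₀` on `{Mᵢ}`, antiflags and disjoint block
pairs (which lie in one parallel class, as `Mᵢ + Mⱼ = V` for `i ≠ j`) from (d), collinear point
pairs from (e), and non-collinear pairs from rank `≤ 3`, which leaves a single `G₀`-orbit outside
`{0} ∪ ⋃ Mᵢ`. Blocks from different parallel classes meet in a translate of `Mᵢ ∩ Mⱼ`, of constant
size by 2-transitivity. In the incidence graph the distance between two vertices detects which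
of the six relations they are in, so pairwise transitivity gives transitivity on every sphere of
the vertex stabiliser; two distinct parallel blocks are at distance exactly `4`.
-/

open SimpleGraph

namespace SimpleGraph

variable {V : Type*} {Γ : SimpleGraph V} {u z w : V}

lemma exists_adj_adj_of_dist_eq_two (h : Γ.dist u w = 2) :
    u ≠ w ∧ ∃ z, Γ.Adj u z ∧ Γ.Adj z w := by
  obtain ⟨p, hp⟩ := exists_walk_of_dist_ne_zero (h ▸ two_ne_zero)
  refine ⟨(dist_ne_zero_iff_ne_and_reachable.mp (h ▸ two_ne_zero)).1, p.getVert 1, ?_, ?_⟩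
  · simpa using p.adj_getVert_succ (i := 0) (by omega)
  · have h₂ := p.adj_getVert_succ (i := 1) (by omega)
    rwa [show 1 + 1 = p.length by omega, p.getVert_length] at h₂

lemma dist_le_two_of_adj_of_adj (h₁ : Γ.Adj u z) (h₂ : Γ.Adj z w) : Γ.dist u w ≤ 2 :=
  dist_le (.cons h₁ (.cons h₂ .nil))

end SimpleGraph

namespace DIncGraph

variable {P L : Type*} {I : P → L → Prop}

@[simp] lemma adj_inl_inr {x : P} {s : L} : (DIncGraph I).Adj (.inl x) (.inr s) ↔ I x s := by
  simp [DIncGraph]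

@[simp] lemma adj_inr_inl {x : P} {s : L} : (DIncGraph I).Adj (.inr s) (.inl x) ↔ I x s := by
  simp [DIncGraph]

@[simp] lemma not_adj_inl_inl {x y : P} : ¬ (DIncGraph I).Adj (.inl x) (.inl y) := by
  simp [DIncGraph]

@[simp] lemma not_adj_inr_inr {s t : L} : ¬ (DIncGraph I).Adj (.inr s) (.inr t) := by
  simp [DIncGraph]

variable (I) in
def sideColoring : (DIncGraph I).Coloring Bool :=
  Coloring.mk Sum.isLeft (by rintro (x | s) (y | t) h <;> simp_all)

variable (I) in
lemma isBipartition_range_inl : IsBipartition (DIncGraph I) (Set.range Sum.inl) := by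
  rintro (x | s) (y | t) h <;> simp_all

lemma even_dist_iff {u w : P ⊕ L} (h : (DIncGraph I).dist u w ≠ 0) :
    Even ((DIncGraph I).dist u w) ↔ (u.isLeft ↔ w.isLeft) := by
  obtain ⟨p, hp⟩ := exists_walk_of_dist_ne_zero h
  rw [← hp]
  exact (sideColoring I).even_length_iff_congr p

lemma isLeft_iff_of_dist_eq {u w w' : P ⊕ L}
    (h : (DIncGraph I).dist u w = (DIncGraph I).dist u w') (h₀ : (DIncGraph I).dist u w ≠ 0) :
    (w.isLeft ↔ w'.isLeft) := by
  have h₁ := even_dist_iff h₀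
  rw [h, even_dist_iff (h ▸ h₀)] at h₁
  tauto

lemma dist_eq_two_of_adj_of_adj {u z w : P ⊕ L} (hne : u ≠ w) (hside : u.isLeft = w.isLeft)
    (h₁ : (DIncGraph I).Adj u z) (h₂ : (DIncGraph I).Adj z w) : (DIncGraph I).dist u w = 2 := by
  have h₀ : (DIncGraph I).dist u w ≠ 0 :=
    dist_ne_zero_iff_ne_and_reachable.mpr ⟨hne, h₁.reachable.trans h₂.reachable⟩
  have heven := (even_dist_iff h₀).mpr (by simp [hside])
  have hle := dist_le_two_of_adj_of_adj h₁ h₂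
  rw [Nat.even_iff] at heven
  omega

lemma dist_inl_inl_eq_two_iff {x y : P} :
    (DIncGraph I).dist (.inl x) (.inl y) = 2 ↔ x ≠ y ∧ ∃ s, I x s ∧ I y s := by
  constructor
  · intro h
    obtain ⟨hne, (z | s), h₁, h₂⟩ := exists_adj_adj_of_dist_eq_two h
    · simp at h₁
    · exact ⟨fun hxy => hne (congrArg _ hxy), s, adj_inl_inr.mp h₁, adj_inr_inl.mp h₂⟩
  · rintro ⟨hne, s, hx, hy⟩
    exact dist_eq_two_of_adj_of_adj (by simpa) rfl (adj_inl_inr.mpr hx) (adj_inr_inl.mpr hy)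

lemma dist_inr_inr_eq_two_iff {s t : L} :
    (DIncGraph I).dist (.inr s) (.inr t) = 2 ↔ s ≠ t ∧ ∃ x, I x s ∧ I x t := by
  constructor
  · intro h
    obtain ⟨hne, (x | z), h₁, h₂⟩ := exists_adj_adj_of_dist_eq_two h
    · exact ⟨fun hst => hne (congrArg _ hst), x, adj_inr_inl.mp h₁, adj_inl_inr.mp h₂⟩
    · simp at h₁
  · rintro ⟨hne, x, hs, ht⟩
    exact dist_eq_two_of_adj_of_adj (by simpa) rfl (adj_inr_inl.mpr hs) (adj_inl_inr.mpr ht)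

lemma dist_inr_inr_eq_four {s t : L} (hne : s ≠ t) (hdisj : ¬∃ x, I x s ∧ I x t)
    (p : (DIncGraph I).Walk (.inr s) (.inr t)) (hp : p.length = 4) :
    (DIncGraph I).dist (.inr s) (.inr t) = 4 := by
  have h₀ : (DIncGraph I).dist (.inr s) (.inr t) ≠ 0 :=
    dist_ne_zero_iff_ne_and_reachable.mpr ⟨by simpa, p.reachable⟩
  have h₂ : (DIncGraph I).dist (.inr s) (.inr t) ≠ 2 := fun h =>
    hdisj (dist_inr_inr_eq_two_iff.mp h).2
  have heven := (even_dist_iff h₀).mpr (by simp)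
  have hle := hp ▸ dist_le p
  rw [Nat.even_iff] at heven
  omega

end DIncGraph

lemma DIncGraph.adj_of_mem {V : Type*} {𝓑 : Set (Set V)} {x : V} {s : 𝓑}
    (h : x ∈ (s : Set V)) :
    (DIncGraph fun (x : V) (s : 𝓑) => x ∈ (s : Set V)).Adj (.inl x) (.inr s) :=
  DIncGraph.adj_inl_inr.mpr h

section Lift

variable {V : Type*} {𝓑 : Set (Set V)} {G : Subgroup (Equiv.Perm V)}

def liftPerm (hG : ∀ σ ∈ G, ∀ s ∈ 𝓑, (fun z => σ z) '' s ∈ 𝓑) :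
    G →* Equiv.Perm (V ⊕ 𝓑) where
  toFun g := Equiv.sumCongr g
    { toFun s := ⟨(fun z => (g : Equiv.Perm V) z) '' s, hG _ g.2 _ s.2⟩
      invFun s := ⟨(g : Equiv.Perm V).symm '' s, hG _ (G.inv_mem g.2) _ s.2⟩
      left_inv s := Subtype.ext ((g : Equiv.Perm V).symm_image_image s)
      right_inv s := Subtype.ext ((g : Equiv.Perm V).image_symm_image s) }
  map_one' := by
    ext (x | s)
    · rfl
    · simp
  map_mul' g h := by
    ext (x | s)
    · rfl
    · simp [Set.image_image]

variable (hG : ∀ σ ∈ G, ∀ s ∈ 𝓑, (fun z => σ z) '' s ∈ 𝓑)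

@[simp] lemma liftPerm_inl (g : G) (x : V) :
    liftPerm hG g (.inl x) = .inl ((g : Equiv.Perm V) x) := rfl

lemma liftPerm_inr (g : G) (s : 𝓑) :
    liftPerm hG g (.inr s) = .inr ⟨(fun z => (g : Equiv.Perm V) z) '' s, hG _ g.2 _ s.2⟩ := rfl

lemma liftPerm_inr_eq {g : G} {s t : 𝓑} (h : (fun z => (g : Equiv.Perm V) z) '' s = t) :
    liftPerm hG g (.inr s) = .inr t :=
  congrArg Sum.inr (Subtype.ext h)

lemma isGraphAut_liftPerm (g : G) :
    IsGraphAut (DIncGraph (fun (x : V) (s : 𝓑) => x ∈ (s : Set V))) (liftPerm hG g) := by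
  rintro (x | s) (y | t) <;> simp [liftPerm_inr]

end Lift

section Sphere

variable {V : Type*} {𝓑 : Set (Set V)} {G : Subgroup (Equiv.Perm V)}
  (hG : ∀ σ ∈ G, ∀ s ∈ 𝓑, (fun z => σ z) '' s ∈ 𝓑)

lemma exists_liftPerm_fixing_inl (hPT : SetPT 𝓑 G) {a : V} {x y : V ⊕ 𝓑}
    (h : (DIncGraph fun (x : V) (s : 𝓑) => x ∈ (s : Set V)).dist (.inl a) x =
      (DIncGraph fun (x : V) (s : 𝓑) => x ∈ (s : Set V)).dist (.inl a) y)
    (h₀ : (DIncGraph fun (x : V) (s : 𝓑) => x ∈ (s : Set V)).dist (.inl a) x ≠ 0) :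
    ∃ g : G, liftPerm hG g (.inl a) = .inl a ∧ liftPerm hG g x = y := by
  classical
  obtain ⟨hflag, hantiflag, hcol, hnoncol, -, -⟩ := hPT
  have hside := DIncGraph.isLeft_iff_of_dist_eq h h₀
  rcases x with b | t <;> rcases y with b' | t' <;>
    simp only [Sum.isLeft_inl, Sum.isLeft_inr, Bool.false_eq_true, iff_false, iff_true,
      not_true_eq_false] at hside
  · have hiff := congrArg (· = 2) h
    simp only [eq_iff_iff, DIncGraph.dist_inl_inl_eq_two_iff, Subtype.exists,
      exists_prop] at hiff
    have hab : a ≠ b := by rintro rfl; simp at h₀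
    have hab' : a ≠ b' := by rintro rfl; simp [h] at h₀
    obtain ⟨σ, hσ, hσa, hσb⟩ := if hc : ∃ s ∈ 𝓑, a ∈ s ∧ b ∈ s
      then hcol a b a b' hab hab' hc (hiff.mp ⟨hab, hc⟩).2
      else hnoncol a b a b' hab hab' hc fun hc' => hc (hiff.mpr ⟨hab', hc'⟩).2
    exact ⟨⟨σ, hσ⟩, by simp [hσa], by simp [hσb]⟩
  · have hiff := congrArg (· = 1) h
    simp only [eq_iff_iff, dist_eq_one_iff_adj, DIncGraph.adj_inl_inr] at hiff
    obtain ⟨σ, hσ, hσa, hσt⟩ := if ha : a ∈ (t : Set V)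
      then hflag a t t.2 a t' t'.2 ha (hiff.mp ha)
      else hantiflag a t t.2 a t' t'.2 ha fun ha' => ha (hiff.mpr ha')
    exact ⟨⟨σ, hσ⟩, by simp [hσa], liftPerm_inr_eq hG hσt⟩

lemma exists_liftPerm_fixing_inr (hPT : SetPT 𝓑 G) {s : 𝓑} {x y : V ⊕ 𝓑}
    (h : (DIncGraph fun (x : V) (s : 𝓑) => x ∈ (s : Set V)).dist (.inr s) x =
      (DIncGraph fun (x : V) (s : 𝓑) => x ∈ (s : Set V)).dist (.inr s) y)
    (h₀ : (DIncGraph fun (x : V) (s : 𝓑) => x ∈ (s : Set V)).dist (.inr s) x ≠ 0) :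
    ∃ g : G, liftPerm hG g (.inr s) = .inr s ∧ liftPerm hG g x = y := by
  classical
  obtain ⟨hflag, hantiflag, -, -, hmeet, hdisj⟩ := hPT
  have hside := DIncGraph.isLeft_iff_of_dist_eq h h₀
  rcases x with b | t <;> rcases y with b' | t' <;>
    simp only [Sum.isLeft_inl, Sum.isLeft_inr, Bool.false_eq_true, iff_false, iff_true,
      not_true_eq_false] at hside
  · have hiff := congrArg (· = 1) h
    simp only [eq_iff_iff, dist_eq_one_iff_adj, DIncGraph.adj_inr_inl] at hiff
    obtain ⟨σ, hσ, hσb, hσs⟩ := if hb : b ∈ (s : Set V)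
      then hflag b s s.2 b' s s.2 hb (hiff.mp hb)
      else hantiflag b s s.2 b' s s.2 hb fun hb' => hb (hiff.mpr hb')
    exact ⟨⟨σ, hσ⟩, liftPerm_inr_eq hG hσs, by simp [hσb]⟩
  · have hiff := congrArg (· = 2) h
    simp only [eq_iff_iff, DIncGraph.dist_inr_inr_eq_two_iff] at hiff
    have hst : (s : Set V) ≠ t := by rintro hst; simp [Subtype.ext hst] at h₀
    have hst' : (s : Set V) ≠ t' := by
      rintro hst
      rw [h] at h₀
      simp [Subtype.ext hst] at h₀
    obtain ⟨σ, hσ, hσs, hσt⟩ := if hm : ((s : Set V) ∩ t).Nonempty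
      then hmeet s s.2 t t.2 s s.2 t' t'.2 hst hst' hm
        (hiff.mp ⟨fun h => hst (congrArg _ h), hm⟩).2
      else hdisj s s.2 t t.2 s s.2 t' t'.2 hst hst' (Set.not_nonempty_iff_eq_empty.mp hm)
        (Set.not_nonempty_iff_eq_empty.mp fun hm' =>
          hm (hiff.mpr ⟨fun h => hst' (congrArg _ h), hm'⟩).2)
    exact ⟨⟨σ, hσ⟩, liftPerm_inr_eq hG hσs, liftPerm_inr_eq hG hσt⟩

theorem exists_liftPerm_of_dist_eq (hPT : SetPT 𝓑 G) {v x y : V ⊕ 𝓑}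
    (h : (DIncGraph fun (x : V) (s : 𝓑) => x ∈ (s : Set V)).dist v x =
      (DIncGraph fun (x : V) (s : 𝓑) => x ∈ (s : Set V)).dist v y)
    (h₀ : (DIncGraph fun (x : V) (s : 𝓑) => x ∈ (s : Set V)).dist v x ≠ 0) :
    ∃ g ∈ (liftPerm hG).range, g v = v ∧ g x = y := by
  obtain ⟨g, hg⟩ : ∃ g : G, liftPerm hG g v = v ∧ liftPerm hG g x = y := by
    rcases v with a | s
    · exact exists_liftPerm_fixing_inl hG hPT h h₀
    · exact exists_liftPerm_fixing_inr hG hPT h h₀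
  exact ⟨_, ⟨g, rfl⟩, hg⟩

end Sphere

section Starlike

variable {V : Type*} {𝓑 : Set (Set V)} {G N : Subgroup (Equiv.Perm V)}
  (hG : ∀ σ ∈ G, ∀ s ∈ 𝓑, (fun z => σ z) '' s ∈ 𝓑)

lemma POrbit_map_liftPerm_inr (hNG : N ≤ G) (s : 𝓑) :
    POrbit ((N.subgroupOf G).map (liftPerm hG)) (.inr s) =
      Sum.inr '' (Subtype.val ⁻¹' {s' | ∃ σ ∈ N, (fun z => σ z) '' s = s'}) := by
  ext x
  constructor
  · rintro ⟨_, ⟨g, hgN, rfl⟩, rfl⟩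
    exact ⟨_, ⟨g, Subgroup.mem_subgroupOf.mp hgN, rfl⟩, rfl⟩
  · rintro ⟨t, ⟨σ, hσ, hσt⟩, rfl⟩
    exact ⟨_, ⟨⟨σ, hNG hσ⟩, Subgroup.mem_subgroupOf.mpr hσ, rfl⟩, liftPerm_inr_eq hG hσt⟩

lemma ncard_POrbits_inr (hNG : N ≤ G) :
    {S | ∃ x ∈ (Set.range (Sum.inl : V → V ⊕ 𝓑))ᶜ,
      S = POrbit ((N.subgroupOf G).map (liftPerm hG)) x}.ncard =
    {O : Set (Set V) | ∃ s ∈ 𝓑, O = {s' | ∃ σ ∈ N, (fun z => σ z) '' s = s'}}.ncard := by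
  set F : Set (Set V) → Set (V ⊕ 𝓑) := fun O => Sum.inr '' (Subtype.val ⁻¹' O)
  have horbits : {S | ∃ x ∈ (Set.range (Sum.inl : V → V ⊕ 𝓑))ᶜ,
      S = POrbit ((N.subgroupOf G).map (liftPerm hG)) x} =
      F '' {O : Set (Set V) | ∃ s ∈ 𝓑, O = {s' | ∃ σ ∈ N, (fun z => σ z) '' s = s'}} := by
    ext S
    constructor
    · rintro ⟨(x | s), hx, rfl⟩
      · exact absurd ⟨x, rfl⟩ hx
      · exact ⟨_, ⟨s, s.2, rfl⟩, (POrbit_map_liftPerm_inr hG hNG s).symm⟩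
    · rintro ⟨_, ⟨s, hs, rfl⟩, rfl⟩
      exact ⟨.inr ⟨s, hs⟩, by simp, (POrbit_map_liftPerm_inr hG hNG ⟨s, hs⟩).symm⟩
  rw [horbits, Set.InjOn.ncard_image]
  have hsub : ∀ s ∈ 𝓑, {s' | ∃ σ ∈ N, (fun z => σ z) '' s = s'} ⊆ 𝓑 := by
    rintro s hs _ ⟨σ, hσ, rfl⟩
    exact hG σ (hNG hσ) s hs
  rintro _ ⟨s, hs, rfl⟩ _ ⟨t, ht, rfl⟩ hst
  rw [← Set.inter_eq_right.mpr (hsub s hs), ← Set.inter_eq_right.mpr (hsub t ht),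
    ← Subtype.preimage_coe_eq_preimage_coe_iff]
  exact (Set.image_injective.mpr Sum.inr_injective) hst

theorem isStarlike_liftPerm (hNG : N ≤ G) (hN : ∀ x y : V, ∃ σ ∈ N, σ x = y) {r : ℕ}
    (hr : {O : Set (Set V) | ∃ s ∈ 𝓑, O = {s' | ∃ σ ∈ N, (fun z => σ z) '' s = s'}}.ncard = r) :
    IsStarlike (DIncGraph fun (x : V) (s : 𝓑) => x ∈ (s : Set V)) (Set.range Sum.inl)
      ((N.subgroupOf G).map (liftPerm hG)) r := by
  refine ⟨?_, ?_, (ncard_POrbits_inr hG hNG).trans hr⟩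
  · rintro _ ⟨g, -, rfl⟩ (x | s) <;> simp [liftPerm_inr]
  · rintro _ ⟨x, rfl⟩ _ ⟨y, rfl⟩
    obtain ⟨σ, hσ, rfl⟩ := hN x y
    exact ⟨_, ⟨⟨σ, hNG hσ⟩, Subgroup.mem_subgroupOf.mpr hσ, rfl⟩, rfl⟩

end Starlike

namespace Submodule

variable {R V : Type*} [Ring R] [AddCommGroup V] [Module R V] {M M' : Submodule R V}
  {v w x : V}

def coset (M : Submodule R V) (v : V) : Set V := {x | x - v ∈ M}

@[simp] lemma mem_coset : x ∈ M.coset v ↔ x - v ∈ M := Iff.rfl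

lemma self_mem_coset : v ∈ M.coset v := by simp

lemma coset_eq_coset_iff : M.coset v = M.coset w ↔ w - v ∈ M := by
  refine ⟨fun h => show w ∈ M.coset v by rw [h]; exact self_mem_coset,
    fun h => Set.ext fun x => ?_⟩
  rw [mem_coset, mem_coset, ← M.sub_mem_iff_left h, sub_sub_sub_cancel_right]

lemma coset_eq_of_mem (h : x ∈ M.coset v) : M.coset v = M.coset x :=
  coset_eq_coset_iff.mpr h

lemma eq_of_coset_eq (h : M.coset v = M'.coset w) : M = M' := by
  have hv : v - w ∈ M' := show v ∈ M'.coset w by rw [← h]; exact self_mem_coset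
  ext m
  have hm : m + v ∈ M.coset v ↔ m + v ∈ M'.coset w := by rw [h]
  rwa [mem_coset, mem_coset, add_sub_cancel_right, add_sub_assoc, M'.add_mem_iff_left hv] at hm

lemma coset_eq_of_inter_nonempty (h : (M.coset v ∩ M.coset w).Nonempty) :
    M.coset v = M.coset w := by
  obtain ⟨z, hv, hw⟩ := h
  rw [coset_eq_of_mem hv, coset_eq_of_mem hw]

lemma coset_inter_nonempty (h : M ⊔ M' = ⊤) (v w : V) :
    (M.coset v ∩ M'.coset w).Nonempty := by
  obtain ⟨a, ha, b, hb, hab⟩ := mem_sup.mp (h ▸ mem_top : w - v ∈ M ⊔ M')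
  refine ⟨v + a, by simpa using ha, ?_⟩
  rw [mem_coset, show v + a - w = a - (w - v) by abel, ← hab, sub_add_cancel_left]
  exact M'.neg_mem hb

lemma coset_inter_eq_image {z : V} (hz : z ∈ M.coset v ∩ M'.coset w) :
    M.coset v ∩ M'.coset w = (z + ·) '' ((M ⊓ M' : Submodule R V) : Set V) := by
  rw [coset_eq_of_mem hz.1, coset_eq_of_mem hz.2]
  ext x
  simp only [Set.mem_inter_iff, mem_coset, Set.mem_image, SetLike.mem_coe, mem_inf]
  exact ⟨fun h => ⟨x - z, h, add_sub_cancel z x⟩, by rintro ⟨m, hm, rfl⟩; simpa using hm⟩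

lemma image_addRight_coset (t : V) : (Equiv.addRight t) '' M.coset v = M.coset (v + t) := by
  ext x
  simp [show x + -t - v = x - (v + t) by abel]

lemma map_linearEquiv_eq_iff {g : V ≃ₗ[R] V} :
    M.map (g : V →ₗ[R] V) = M' ↔ ∀ x, g x ∈ M' ↔ x ∈ M := by
  rw [SetLike.ext_iff]
  refine ⟨fun h x => by rw [← h, Submodule.mem_map_equiv, g.symm_apply_apply], fun h y => ?_⟩
  rw [Submodule.mem_map_equiv, ← h, g.apply_symm_apply]

end Submodule

namespace LinearEquiv

variable {R V : Type*} [Ring R] [AddCommGroup V] [Module R V]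

def affineThrough (g : V ≃ₗ[R] V) (x x' : V) : Equiv.Perm V :=
  (Equiv.subRight x).trans (g.toEquiv.trans (Equiv.addLeft x'))

variable (g : V ≃ₗ[R] V) (x x' : V)

@[simp] lemma affineThrough_apply (y : V) : g.affineThrough x x' y = x' + g (y - x) := rfl

lemma affineThrough_apply_self : g.affineThrough x x' x = x' := by simp

lemma image_affineThrough_coset (M : Submodule R V) (w : V) :
    (fun z => g.affineThrough x x' z) '' M.coset w =
      (M.map (g : V →ₗ[R] V)).coset (x' + g (w - x)) := by
  ext y
  rw [show (fun z => g.affineThrough x x' z) = g.affineThrough x x' from rfl,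
    Equiv.image_eq_preimage_symm]
  simp only [Set.mem_preimage, Submodule.mem_coset, Submodule.mem_map_equiv]
  have hsymm : (g.affineThrough x x').symm y = g.symm (y - x') + x := by
    simp [affineThrough, sub_eq_neg_add]
  rw [hsymm, sub_add_eq_sub_sub, map_sub g.symm (y - x'), g.symm_apply_apply, sub_sub_eq_add_sub]

lemma image_affineThrough_coset_self (M : Submodule R V) :
    (fun z => g.affineThrough x x' z) '' M.coset x = (M.map (g : V →ₗ[R] V)).coset x' := by
  rw [image_affineThrough_coset, sub_self, map_zero, add_zero]

lemma affineThrough_mem {G₀ : Subgroup (V ≃ₗ[R] V)} {G : Subgroup (Equiv.Perm V)}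
    (hG : ∀ σ : Equiv.Perm V, σ ∈ G ↔ ∃ g ∈ G₀, ∃ t : V, ∀ x : V, σ x = g x + t)
    {g : V ≃ₗ[R] V} (hg : g ∈ G₀) (x x' : V) : g.affineThrough x x' ∈ G :=
  (hG _).mpr ⟨g, hg, x' - g x, fun y => by simp; abel⟩

end LinearEquiv

lemma MulAction.mem_orbit_of_ncard_range_orbit_le_three {H X : Type*} [Group H]
    [MulAction H X]
    (hfin : (Set.range (orbit H : X → Set X)).Finite)
    (h3 : (Set.range (orbit H : X → Set X)).ncard ≤ 3)
    {a b c : X} (hab : a ∉ orbit H b) (hac : a ∉ orbit H c) (hbc : b ∉ orbit H c) (d : X) :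
    d ∈ orbit H a ∨ d ∈ orbit H b ∨ d ∈ orbit H c := by
  by_contra! hd
  obtain ⟨hda, hdb, hdc⟩ := hd
  have h4 : ({orbit H a, orbit H b, orbit H c, orbit H d} : Set (Set X)).ncard = 4 := by
    rw [Set.ncard_insert_of_notMem, Set.ncard_insert_of_notMem, Set.ncard_pair] <;>
      simp [orbit_eq_iff, mem_orbit_symm, *]
  have hsub : ({orbit H a, orbit H b, orbit H c, orbit H d} : Set (Set X)) ⊆
      Set.range (orbit H) := by
    simp [Set.insert_subset_iff]
  have := Set.ncard_le_ncard hsub hfin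
  omega

section CosetDesign

variable {R V ι : Type*} [Ring R] [AddCommGroup V] [Module R V]
  {G₀ : Subgroup (V ≃ₗ[R] V)} {G N : Subgroup (Equiv.Perm V)} {Ms : ι → Submodule R V}

def cosets (Ms : ι → Submodule R V) : Set (Set V) := {s | ∃ i v, s = (Ms i).coset v}

lemma coset_mem_cosets (i : ι) (v : V) : (Ms i).coset v ∈ cosets Ms := ⟨i, v, rfl⟩

lemma image_mem_cosets
    (hG : ∀ σ : Equiv.Perm V, σ ∈ G ↔ ∃ g ∈ G₀, ∃ t : V, ∀ x : V, σ x = g x + t)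
    (hb1 : ∀ g ∈ G₀, ∀ i, ∃ j, (Ms i).map (g : V →ₗ[R] V) = Ms j) :
    ∀ σ ∈ G, ∀ s ∈ cosets Ms, (fun z => σ z) '' s ∈ cosets Ms := by
  rintro σ hσ _ ⟨i, v, rfl⟩
  obtain ⟨g, hg, t, hσt⟩ := (hG σ).mp hσ
  obtain ⟨j, hj⟩ := hb1 g hg i
  have hσ' : (fun z => σ z) = fun z => g.affineThrough 0 t z := funext fun z => by
    simp [hσt, add_comm]
  rw [hσ', g.image_affineThrough_coset, hj]
  exact coset_mem_cosets _ _

lemma sup_eq_top_of_ne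
    (hb3 : ∀ i j i' j', i ≠ j → i' ≠ j' → ∃ g ∈ G₀,
      (Ms i).map (g : V →ₗ[R] V) = Ms i' ∧ (Ms j).map (g : V →ₗ[R] V) = Ms j')
    {i₀ i₁ : ι} (h₀₁ : i₀ ≠ i₁) (hc : Ms i₀ ⊔ Ms i₁ = ⊤) {i j : ι} (hij : i ≠ j) :
    Ms i ⊔ Ms j = ⊤ := by
  obtain ⟨g, -, hi, hj⟩ := hb3 i₀ i₁ i j h₀₁ hij
  rw [← hi, ← hj, ← Submodule.map_sup, hc, Submodule.map_top, LinearEquiv.range]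

lemma ne_of_forall_map_eq_self (hinj : Function.Injective Ms)
    (hb2 : ∀ i j, ∃ g ∈ G₀, (Ms i).map (g : V →ₗ[R] V) = Ms j) {i j : ι} (hij : i ≠ j)
    {K : Submodule R V} (hK : ∀ g : V ≃ₗ[R] V, K.map (g : V →ₗ[R] V) = K) (k : ι) :
    Ms k ≠ K := by
  intro hk
  obtain ⟨g, -, hg⟩ := hb2 k i
  obtain ⟨g', -, hg'⟩ := hb2 k j
  exact hij (hinj (by rw [← hg, ← hg', hk, hK, hK]))

lemma exists_map_eq_and_sub_mem
    (hb2 : ∀ i j, ∃ g ∈ G₀, (Ms i).map (g : V →ₗ[R] V) = Ms j) {i₀ : ι}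
    (hd : ∀ v w : V, v ∉ Ms i₀ → w ∉ Ms i₀ →
      ∃ g ∈ G₀, (Ms i₀).map (g : V →ₗ[R] V) = Ms i₀ ∧ g v - w ∈ Ms i₀)
    {i i' : ι} {u u' : V} (hu : u ∉ Ms i) (hu' : u' ∉ Ms i') :
    ∃ g ∈ G₀, (Ms i).map (g : V →ₗ[R] V) = Ms i' ∧ g u - u' ∈ Ms i' := by
  obtain ⟨g₁, hg₁, h₁⟩ := hb2 i i₀
  obtain ⟨g₂, hg₂, h₂⟩ := hb2 i' i₀
  rw [Submodule.map_linearEquiv_eq_iff] at h₁ h₂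
  obtain ⟨h, hh, h₀, hhu⟩ := hd (g₁ u) (g₂ u') (by rwa [h₁]) (by rwa [h₂])
  rw [Submodule.map_linearEquiv_eq_iff] at h₀
  refine ⟨g₂⁻¹ * h * g₁, G₀.mul_mem (G₀.mul_mem (G₀.inv_mem hg₂) hh) hg₁,
    Submodule.map_linearEquiv_eq_iff.mpr fun x => ?_, ?_⟩
  · rw [← h₂]
    simp [h₀, h₁]
  · rw [← h₂, map_sub]
    simpa using hhu

lemma stabilizer_orbit_eq_orbit
    (hG : ∀ σ : Equiv.Perm V, σ ∈ G ↔ ∃ g ∈ G₀, ∃ t : V, ∀ x : V, σ x = g x + t) (y : V) :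
    {z | ∃ σ ∈ G, σ 0 = 0 ∧ σ y = z} = MulAction.orbit G₀ y := by
  ext z
  simp only [Set.mem_ofPred_eq, MulAction.mem_orbit_iff, Subtype.exists, Subgroup.mk_smul,
    LinearEquiv.smul_def, exists_prop]
  constructor
  · rintro ⟨σ, hσ, hσ0, rfl⟩
    obtain ⟨g, hg, t, hσt⟩ := (hG σ).mp hσ
    have ht : t = 0 := by simpa [hσ0] using (hσt 0).symm
    exact ⟨g, hg, by simp [hσt, ht]⟩
  · rintro ⟨g, hg, rfl⟩
    exact ⟨g.affineThrough 0 0, LinearEquiv.affineThrough_mem hG hg 0 0, by simp, by simp⟩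

lemma exists_apply_eq_of_forall_notMem
    (hG : ∀ σ : Equiv.Perm V, σ ∈ G ↔ ∃ g ∈ G₀, ∃ t : V, ∀ x : V, σ x = g x + t)
    (ha : {S : Set V | ∃ y : V, S = {z | ∃ σ ∈ G, σ 0 = 0 ∧ σ y = z}}.ncard ∈ ({2, 3} : Set ℕ))
    (hb1 : ∀ g ∈ G₀, ∀ i, ∃ j, (Ms i).map (g : V →ₗ[R] V) = Ms j)
    {m : V} (hm : m ≠ 0) {i : ι} (hmi : m ∈ Ms i) {c c' : V} (hc : ∀ i, c ∉ Ms i)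
    (hc' : ∀ i, c' ∉ Ms i) : ∃ g ∈ G₀, g c = c' := by
  have horbits : {S : Set V | ∃ y : V, S = {z | ∃ σ ∈ G, σ 0 = 0 ∧ σ y = z}} =
      Set.range (MulAction.orbit G₀) := by
    simp_rw [stabilizer_orbit_eq_orbit hG]
    ext S
    exact exists_congr fun y => eq_comm
  have h23 : (Set.range (MulAction.orbit G₀ : V → Set V)).ncard = 2 ∨
      (Set.range (MulAction.orbit G₀ : V → Set V)).ncard = 3 := horbits ▸ ha
  have hfin := Set.finite_of_ncard_ne_zero (s := Set.range (MulAction.orbit G₀ : V → Set V))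
    (by omega)
  have h3 : (Set.range (MulAction.orbit G₀ : V → Set V)).ncard ≤ 3 := by omega
  have horbit_m : ∀ x ∈ MulAction.orbit G₀ m, ∃ j, x ∈ Ms j := by
    rintro _ ⟨g, rfl⟩
    obtain ⟨j, hj⟩ := hb1 g g.2 i
    exact ⟨j, hj ▸ Submodule.mem_map_of_mem hmi⟩
  have horbit_0 : ∀ x ∈ MulAction.orbit G₀ (0 : V), x = 0 := by
    rintro _ ⟨g, rfl⟩
    exact smul_zero g
  have hc0 : ∀ {x : V}, (∀ i, x ∉ Ms i) → x ≠ 0 := fun hx h0 => hx i (h0 ▸ (Ms i).zero_mem)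
  rcases MulAction.mem_orbit_of_ncard_range_orbit_le_three hfin h3
    (fun h => let ⟨j, hj⟩ := horbit_m c h; hc j hj) (fun h => hc0 hc (horbit_0 c h))
    (fun h => hm (horbit_0 m h)) c' with ⟨g, rfl⟩ | h | h
  · exact ⟨g, g.2, rfl⟩
  · obtain ⟨j, hj⟩ := horbit_m c' h
    exact absurd hj (hc' j)
  · exact absurd (horbit_0 c' h) (hc0 hc')

lemma exists_mem_cosets_iff {x y : V} :
    (∃ s ∈ cosets Ms, x ∈ s ∧ y ∈ s) ↔ ∃ i, y - x ∈ Ms i := by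
  constructor
  · rintro ⟨_, ⟨i, v, rfl⟩, hx, hy⟩
    exact ⟨i, by simpa using (Ms i).sub_mem hy hx⟩
  · rintro ⟨i, h⟩
    exact ⟨_, coset_mem_cosets i x, Submodule.self_mem_coset, h⟩

lemma eq_and_sub_notMem_of_coset_inter_eq_empty (hsup : ∀ i j, i ≠ j → Ms i ⊔ Ms j = ⊤)
    {i j : ι} {v w : V} (hne : (Ms i).coset v ≠ (Ms j).coset w)
    (hdisj : (Ms i).coset v ∩ (Ms j).coset w = ∅) : i = j ∧ w - v ∉ Ms i := by
  obtain rfl : i = j := by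
    by_contra hij
    exact (Submodule.coset_inter_nonempty (hsup i j hij) v w).ne_empty hdisj
  exact ⟨rfl, fun h => hne (Submodule.coset_eq_coset_iff.mpr h)⟩

lemma exists_apply_eq_apply_eq
    (hG : ∀ σ : Equiv.Perm V, σ ∈ G ↔ ∃ g ∈ G₀, ∃ t : V, ∀ x : V, σ x = g x + t)
    {g : V ≃ₗ[R] V} (hg : g ∈ G₀) {x y x' y' : V}
    (h : g (y - x) = y' - x') : ∃ σ ∈ G, σ x = x' ∧ σ y = y' :=
  ⟨g.affineThrough x x', g.affineThrough_mem hG hg x x', g.affineThrough_apply_self x x',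
    by simp [h]⟩

lemma exists_image_eq_image_eq_of_inter_nonempty
    (hG : ∀ σ : Equiv.Perm V, σ ∈ G ↔ ∃ g ∈ G₀, ∃ t : V, ∀ x : V, σ x = g x + t)
    (hb3 : ∀ i j i' j', i ≠ j → i' ≠ j' → ∃ g ∈ G₀,
      (Ms i).map (g : V →ₗ[R] V) = Ms i' ∧ (Ms j).map (g : V →ₗ[R] V) = Ms j') :
    ∀ s ∈ cosets Ms, ∀ t ∈ cosets Ms, ∀ s' ∈ cosets Ms, ∀ t' ∈ cosets Ms, s ≠ t → s' ≠ t' →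
      (s ∩ t).Nonempty → (s' ∩ t').Nonempty →
      ∃ σ ∈ G, (fun z => σ z) '' s = s' ∧ (fun z => σ z) '' t = t' := by
  rintro _ ⟨i, v, rfl⟩ _ ⟨j, w, rfl⟩ _ ⟨i', v', rfl⟩ _ ⟨j', w', rfl⟩ hne hne'
    ⟨z, hz⟩ ⟨z', hz'⟩
  have hij : i ≠ j := by
    rintro rfl
    exact hne (Submodule.coset_eq_of_inter_nonempty ⟨z, hz⟩)
  have hij' : i' ≠ j' := by
    rintro rfl
    exact hne' (Submodule.coset_eq_of_inter_nonempty ⟨z', hz'⟩)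
  obtain ⟨g, hg, hi, hj⟩ := hb3 i j i' j' hij hij'
  refine ⟨g.affineThrough z z', g.affineThrough_mem hG hg z z', ?_, ?_⟩
  · rw [Submodule.coset_eq_of_mem hz.1, g.image_affineThrough_coset_self, hi,
      ← Submodule.coset_eq_of_mem hz'.1]
  · rw [Submodule.coset_eq_of_mem hz.2, g.image_affineThrough_coset_self, hj,
      ← Submodule.coset_eq_of_mem hz'.2]

lemma exists_image_eq_image_eq_of_inter_eq_empty
    (hG : ∀ σ : Equiv.Perm V, σ ∈ G ↔ ∃ g ∈ G₀, ∃ t : V, ∀ x : V, σ x = g x + t)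
    (hb2 : ∀ i j, ∃ g ∈ G₀, (Ms i).map (g : V →ₗ[R] V) = Ms j) {i₀ : ι}
    (hd : ∀ v w : V, v ∉ Ms i₀ → w ∉ Ms i₀ →
      ∃ g ∈ G₀, (Ms i₀).map (g : V →ₗ[R] V) = Ms i₀ ∧ g v - w ∈ Ms i₀)
    (hsup : ∀ i j, i ≠ j → Ms i ⊔ Ms j = ⊤) :
    ∀ s ∈ cosets Ms, ∀ t ∈ cosets Ms, ∀ s' ∈ cosets Ms, ∀ t' ∈ cosets Ms, s ≠ t → s' ≠ t' →
      s ∩ t = ∅ → s' ∩ t' = ∅ →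
      ∃ σ ∈ G, (fun z => σ z) '' s = s' ∧ (fun z => σ z) '' t = t' := by
  rintro _ ⟨i, v, rfl⟩ _ ⟨j, w, rfl⟩ _ ⟨i', v', rfl⟩ _ ⟨j', w', rfl⟩ hne hne' hdisj hdisj'
  obtain ⟨rfl, hu⟩ := eq_and_sub_notMem_of_coset_inter_eq_empty hsup hne hdisj
  obtain ⟨rfl, hu'⟩ := eq_and_sub_notMem_of_coset_inter_eq_empty hsup hne' hdisj'
  obtain ⟨g, hg, hgi, hgu⟩ := exists_map_eq_and_sub_mem hb2 hd hu hu'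
  refine ⟨g.affineThrough v v', g.affineThrough_mem hG hg v v', ?_, ?_⟩
  · rw [g.image_affineThrough_coset_self, hgi]
  · rw [g.image_affineThrough_coset, hgi, Submodule.coset_eq_coset_iff,
      ← Submodule.neg_mem_iff]
    convert hgu using 1
    abel

theorem setPT_cosets
    (hG : ∀ σ : Equiv.Perm V, σ ∈ G ↔ ∃ g ∈ G₀, ∃ t : V, ∀ x : V, σ x = g x + t)
    (hb2 : ∀ i j, ∃ g ∈ G₀, (Ms i).map (g : V →ₗ[R] V) = Ms j)
    (hb3 : ∀ i j i' j', i ≠ j → i' ≠ j' → ∃ g ∈ G₀,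
      (Ms i).map (g : V →ₗ[R] V) = Ms i' ∧ (Ms j).map (g : V →ₗ[R] V) = Ms j') {i₀ : ι}
    (hd : ∀ v w : V, v ∉ Ms i₀ → w ∉ Ms i₀ →
      ∃ g ∈ G₀, (Ms i₀).map (g : V →ₗ[R] V) = Ms i₀ ∧ g v - w ∈ Ms i₀)
    (hsup : ∀ i j, i ≠ j → Ms i ⊔ Ms j = ⊤)
    (he : ∀ x y : V, x ≠ 0 → y ≠ 0 → (∃ i, x ∈ Ms i) → (∃ i, y ∈ Ms i) → ∃ g ∈ G₀, g x = y)
    (hcompl : ∀ c c' : V, (∀ i, c ∉ Ms i) → (∀ i, c' ∉ Ms i) → ∃ g ∈ G₀, g c = c') :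
    SetPT (cosets Ms) G := by
  refine ⟨?_, ?_, ?_, ?_, exists_image_eq_image_eq_of_inter_nonempty hG hb3,
    exists_image_eq_image_eq_of_inter_eq_empty hG hb2 hd hsup⟩
  · rintro x _ ⟨i, v, rfl⟩ x' _ ⟨i', v', rfl⟩ hx hx'
    obtain ⟨g, hg, hgi⟩ := hb2 i i'
    refine ⟨g.affineThrough x x', g.affineThrough_mem hG hg x x',
      g.affineThrough_apply_self x x', ?_⟩
    rw [Submodule.coset_eq_of_mem hx, g.image_affineThrough_coset_self, hgi,
      ← Submodule.coset_eq_of_mem hx']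
  · rintro x _ ⟨i, v, rfl⟩ x' _ ⟨i', v', rfl⟩ hx hx'
    obtain ⟨g, hg, hgi, hgu⟩ := exists_map_eq_and_sub_mem hb2 hd hx hx'
    refine ⟨g.affineThrough x x', g.affineThrough_mem hG hg x x',
      g.affineThrough_apply_self x x', ?_⟩
    rw [g.image_affineThrough_coset, hgi, Submodule.coset_eq_coset_iff]
    convert hgu using 1
    rw [← neg_sub x v, map_neg]
    abel
  · rintro x y x' y' hxy hxy' h h'
    rw [exists_mem_cosets_iff] at h h'
    obtain ⟨g, hg, hgxy⟩ := he _ _ (sub_ne_zero.mpr hxy.symm) (sub_ne_zero.mpr hxy'.symm) h h'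
    exact exists_apply_eq_apply_eq hG hg hgxy
  · rintro x y x' y' - - h h'
    rw [exists_mem_cosets_iff, not_exists] at h h'
    obtain ⟨g, hg, hgxy⟩ := hcompl _ _ h h'
    exact exists_apply_eq_apply_eq hG hg hgxy

lemma image_coset_of_mem_translations
    (hN : ∀ σ : Equiv.Perm V, σ ∈ N ↔ ∃ t : V, ∀ x : V, σ x = x + t)
    {σ : Equiv.Perm V} (hσ : σ ∈ N) (M : Submodule R V) (v : V) :
    ∃ t, (fun z => σ z) '' M.coset v = M.coset (v + t) := by
  obtain ⟨t, ht⟩ := (hN σ).mp hσ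
  have hσt : (fun z => σ z) = Equiv.addRight t := funext ht
  exact ⟨t, by rw [hσt, Submodule.image_addRight_coset]⟩

lemma translationOrbit_coset
    (hN : ∀ σ : Equiv.Perm V, σ ∈ N ↔ ∃ t : V, ∀ x : V, σ x = x + t)
    (M : Submodule R V) (v : V) :
    {s | ∃ σ ∈ N, (fun z => σ z) '' M.coset v = s} = Set.range M.coset := by
  ext s
  constructor
  · rintro ⟨σ, hσ, rfl⟩
    obtain ⟨t, ht⟩ := image_coset_of_mem_translations hN hσ M v
    exact ⟨_, ht.symm⟩
  · rintro ⟨w, rfl⟩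
    refine ⟨Equiv.addRight (w - v), (hN _).mpr ⟨_, fun _ => rfl⟩, ?_⟩
    rw [Submodule.image_addRight_coset, add_sub_cancel]

lemma coset_mem_range_coset_iff (hinj : Function.Injective Ms) {i j : ι} {w : V} :
    (Ms j).coset w ∈ Set.range (Ms i).coset ↔ i = j :=
  ⟨fun ⟨_, h⟩ => hinj (Submodule.eq_of_coset_eq h), by rintro rfl; exact ⟨w, rfl⟩⟩

theorem setNA_cosets (hN : ∀ σ : Equiv.Perm V, σ ∈ N ↔ ∃ t : V, ∀ x : V, σ x = x + t)
    (hinj : Function.Injective Ms) {G₀ : Subgroup (V ≃ₗ[R] V)}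
    (hb3 : ∀ i j i' j', i ≠ j → i' ≠ j' → ∃ g ∈ G₀,
      (Ms i).map (g : V →ₗ[R] V) = Ms i' ∧ (Ms j).map (g : V →ₗ[R] V) = Ms j')
    (hsup : ∀ i j, i ≠ j → Ms i ⊔ Ms j = ⊤) {i₀ i₁ : ι} (h₀₁ : i₀ ≠ i₁) :
    SetNA (cosets Ms) N := by
  refine ⟨fun x y => ⟨Equiv.addRight (y - x), (hN _).mpr ⟨_, fun _ => rfl⟩, by simp⟩, ?_,
    ((Ms i₀ ⊓ Ms i₁ : Submodule R V) : Set V).ncard, ?_⟩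
  · rintro σ hσ _ ⟨i, v, rfl⟩
    obtain ⟨t, ht⟩ := image_coset_of_mem_translations hN hσ (Ms i) v
    exact ht ▸ coset_mem_cosets i _
  · rintro _ ⟨i, v, rfl⟩ _ ⟨j, w, rfl⟩ hne
    have horbit : (∃ σ ∈ N, (fun z => σ z) '' (Ms i).coset v = (Ms j).coset w) ↔ i = j := by
      rw [← coset_mem_range_coset_iff hinj, ← translationOrbit_coset hN]
      rfl
    rw [horbit]
    refine ⟨?_, fun hij => ?_⟩
    · rintro rfl
      by_contra h
      exact hne (Submodule.coset_eq_of_inter_nonempty (Set.nonempty_iff_ne_empty.mpr h))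
    · obtain ⟨z, hz⟩ := Submodule.coset_inter_nonempty (hsup i j hij) v w
      obtain ⟨g, -, hi, hj⟩ := hb3 i₀ i₁ i j h₀₁ hij
      rw [Submodule.coset_inter_eq_image hz,
        Set.ncard_image_of_injective _ (add_right_injective z),
        ← hi, ← hj, ← Submodule.map_inf _ g.injective, Submodule.map_coe, LinearEquiv.coe_coe,
        Set.ncard_image_of_injective _ g.injective]

theorem ncard_translationOrbits_cosets
    (hN : ∀ σ : Equiv.Perm V, σ ∈ N ↔ ∃ t : V, ∀ x : V, σ x = x + t)
    (hinj : Function.Injective Ms) :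
    {O : Set (Set V) | ∃ s ∈ cosets Ms, O = {s' | ∃ σ ∈ N, (fun z => σ z) '' s = s'}}.ncard =
      Nat.card ι := by
  have hclasses : {O : Set (Set V) | ∃ s ∈ cosets Ms,
      O = {s' | ∃ σ ∈ N, (fun z => σ z) '' s = s'}} =
      Set.range fun i => Set.range (Ms i).coset := by
    ext O
    constructor
    · rintro ⟨_, ⟨i, v, rfl⟩, rfl⟩
      exact ⟨i, (translationOrbit_coset hN _ v).symm⟩
    · rintro ⟨i, rfl⟩
      exact ⟨_, coset_mem_cosets i 0, (translationOrbit_coset hN _ 0).symm⟩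
  rw [hclasses, Set.ncard_range_of_injective]
  intro i j hij
  have hj : (Ms j).coset 0 ∈ Set.range (Ms i).coset := by
    simp only at hij
    exact hij ▸ ⟨0, rfl⟩
  exact (coset_mem_range_coset_iff hinj).mp hj

lemma edist_inl_zero_le {i₀ i₁ : ι} (hc : Ms i₀ ⊔ Ms i₁ = ⊤) (u : V ⊕ cosets Ms) :
    (DIncGraph fun (x : V) (s : cosets Ms) => x ∈ (s : Set V)).edist (.inl 0) u ≤ 5 := by
  have hpoint (x : V) :
      (DIncGraph fun (x : V) (s : cosets Ms) => x ∈ (s : Set V)).edist (.inl 0) (.inl x) ≤ 4 := by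
    obtain ⟨a, ha, b, hb, rfl⟩ :=
      Submodule.mem_sup.mp (hc ▸ Submodule.mem_top : x ∈ Ms i₀ ⊔ Ms i₁)
    let s : cosets Ms := ⟨(Ms i₀).coset 0, coset_mem_cosets i₀ 0⟩
    let t : cosets Ms := ⟨(Ms i₁).coset a, coset_mem_cosets i₁ a⟩
    refine (edist_le (.cons (DIncGraph.adj_of_mem (s := s) Submodule.self_mem_coset)
      (.cons (DIncGraph.adj_of_mem (s := s) (show a ∈ (Ms i₀).coset 0 by simpa using ha)).symm
      (.cons (DIncGraph.adj_of_mem (s := t) Submodule.self_mem_coset)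
      (.cons (DIncGraph.adj_of_mem (s := t)
        (show a + b ∈ (Ms i₁).coset a by simpa using hb)).symm .nil))))).trans (by simp)
  rcases u with x | ⟨_, i, v, rfl⟩
  · exact (hpoint x).trans (by norm_num)
  · calc _ ≤ _ + _ := SimpleGraph.edist_triangle (v := .inl v)
      _ ≤ 4 + 1 := add_le_add (hpoint v)
          (edist_le_one_iff_adj_or_eq.mpr
            (.inl (DIncGraph.adj_of_mem Submodule.self_mem_coset)))
      _ = 5 := by norm_num

theorem four_le_diam_cosets {i₀ i₁ : ι} (hc : Ms i₀ ⊔ Ms i₁ = ⊤) {w : V} (hw : w ∉ Ms i₀) :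
    4 ≤ (DIncGraph fun (x : V) (s : cosets Ms) => x ∈ (s : Set V)).diam := by
  let s : cosets Ms := ⟨(Ms i₀).coset 0, coset_mem_cosets i₀ 0⟩
  let s' : cosets Ms := ⟨(Ms i₁).coset 0, coset_mem_cosets i₁ 0⟩
  let t : cosets Ms := ⟨(Ms i₀).coset w, coset_mem_cosets i₀ w⟩
  obtain ⟨z, hz₁, hz₀⟩ := Submodule.coset_inter_nonempty (sup_comm (Ms i₀) _ ▸ hc) 0 w
  have hst : (s : Set V) ≠ t := by simpa [s, t, Submodule.coset_eq_coset_iff] using hw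
  have h₄ := DIncGraph.dist_inr_inr_eq_four (ne_of_apply_ne Subtype.val hst)
    (fun ⟨x, hx⟩ => hst (Submodule.coset_eq_of_inter_nonempty ⟨x, hx⟩))
    (.cons (DIncGraph.adj_of_mem (s := s) Submodule.self_mem_coset).symm
      (.cons (DIncGraph.adj_of_mem (s := s') Submodule.self_mem_coset)
      (.cons (DIncGraph.adj_of_mem (s := s') hz₁).symm
      (.cons (DIncGraph.adj_of_mem (s := t) hz₀) .nil)))) rfl
  have hediam : (DIncGraph fun (x : V) (s : cosets Ms) => x ∈ (s : Set V)).ediam ≠ ⊤ := by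
    refine ne_top_of_le_ne_top (by decide : (2 : ℕ∞) * 5 ≠ ⊤) ?_
    calc _ ≤ 2 * _ := ediam_le_two_mul_eccent (.inl 0)
      _ ≤ 2 * 5 := by gcongr; exact (eccent_le_iff _ _).mpr (edist_inl_zero_le hc)
  exact h₄ ▸ dist_le_diam hediam

end CosetDesign

/-- **Theorem 3** (Theorem `constr->main`): the design and incidence graph of
Construction `constr-regN`.  `V` is a finite vector space over `F_p`, `N` is its group
of translations (as permutations of `V`), `G₀ ≤ GL(V)` and `G = N ⋊ G₀ ≤ AGL(V)`
(realised as a group of permutations of `V`).  Under conditions (a)–(e), the design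
`D = (V, cosets of the Mᵢ, ∈)` admits `G` as a group of automorphisms, is `G`-pairwise
transitive and `N`-nicely affine with `r` parallel classes of blocks, and its incidence
graph is `r`-starlike relative to (the lift of) `N` and locally `(G,4)`-distance
transitive. -/
theorem statement2 {p : ℕ} (V : Type*) [AddCommGroup V]
    [Module (ZMod p) V]
    (G₀ : Subgroup (V ≃ₗ[ZMod p] V)) (G N : Subgroup (Equiv.Perm V))
    (hG : ∀ σ : Equiv.Perm V, σ ∈ G ↔ ∃ g ∈ G₀, ∃ t : V, ∀ x : V, σ x = g x + t)
    (hN : ∀ σ : Equiv.Perm V, σ ∈ N ↔ ∃ t : V, ∀ x : V, σ x = x + t)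
    (r : ℕ) (hr : 3 ≤ r)
    (Ms : Fin r → Submodule (ZMod p) V) (hMsinj : Function.Injective Ms)
    -- (a) `G` has rank 2 or 3 in its (transitive) action on `V`
    (ha : {S : Set V | ∃ y : V, S = {z | ∃ σ ∈ G, σ 0 = 0 ∧ σ y = z}}.ncard ∈ ({2, 3} : Set ℕ))
    -- (b) `{M₁, …, M_r}` is a `G₀`-orbit of subspaces on which `G₀` acts 2-transitively
    (hb1 : ∀ g ∈ G₀, ∀ i : Fin r, ∃ j : Fin r,
      (Ms i).map (g : V →ₗ[ZMod p] V) = Ms j)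
    (hb2 : ∀ i j : Fin r, ∃ g ∈ G₀, (Ms i).map (g : V →ₗ[ZMod p] V) = Ms j)
    (hb3 : ∀ i j i' j' : Fin r, i ≠ j → i' ≠ j' → ∃ g ∈ G₀,
      (Ms i).map (g : V →ₗ[ZMod p] V) = Ms i' ∧ (Ms j).map (g : V →ₗ[ZMod p] V) = Ms j')
    -- (c) `V = M₁ + M₂`
    (hc : Ms ⟨0, by omega⟩ ⊔ Ms ⟨1, by omega⟩ = ⊤)
    -- (d) the stabiliser of `M₁` in `G₀` is transitive on the nontrivial cosets of `M₁`
    (hd : ∀ v w : V, v ∉ Ms ⟨0, by omega⟩ → w ∉ Ms ⟨0, by omega⟩ →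
      ∃ g ∈ G₀, (Ms ⟨0, by omega⟩).map (g : V →ₗ[ZMod p] V) = Ms ⟨0, by omega⟩ ∧
        g v - w ∈ Ms ⟨0, by omega⟩)
    -- (e) `⋃ᵢ Mᵢ ∖ {0}` is a single `G₀`-orbit
    (he : ∀ x y : V, x ≠ 0 → y ≠ 0 → (∃ i, x ∈ Ms i) → (∃ i, y ∈ Ms i) →
      ∃ g ∈ G₀, g x = y) :
    -- the block set: all cosets of the subspaces Mᵢ
    ∀ 𝓑 : Set (Set V), 𝓑 = {s : Set V | ∃ (i : Fin r) (v : V), s = {x : V | x - v ∈ Ms i}} →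
      -- G acts as a group of automorphisms of the design D
      ((∀ σ ∈ G, ∀ s ∈ 𝓑, (fun z => σ z) '' s ∈ 𝓑) ∧
      -- D is G-pairwise transitive
      SetPT 𝓑 G ∧
      -- D is N-nicely affine with r parallel classes of blocks
      SetNA 𝓑 N ∧
      {O : Set (Set V) | ∃ s ∈ 𝓑, O = {s' | ∃ σ ∈ N, (fun z => σ z) '' s = s'}}.ncard = r ∧
      -- the incidence graph Γ(D) is r-starlike relative to N and locally (G,4)-distance
      -- transitive, where G and N act on Γ(D) through the natural lift φ
      ∃ φ : ↥G →* Equiv.Perm (V ⊕ ↥𝓑),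
        (∀ g : ↥G, ∀ x : V, φ g (Sum.inl x) = Sum.inl ((g : Equiv.Perm V) x)) ∧
        (∀ g : ↥G, ∀ s : ↥𝓑, ∃ hs : (fun z => (g : Equiv.Perm V) z) '' (s : Set V) ∈ 𝓑,
          φ g (Sum.inr s) = Sum.inr ⟨(fun z => (g : Equiv.Perm V) z) '' (s : Set V), hs⟩) ∧
        (∀ g : ↥G, IsGraphAut (DIncGraph (fun (x : V) (s : ↥𝓑) => x ∈ (s : Set V))) (φ g)) ∧
        IsBipartition (DIncGraph (fun (x : V) (s : ↥𝓑) => x ∈ (s : Set V)))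
          (Set.range (Sum.inl : V → V ⊕ ↥𝓑)) ∧
        IsStarlike (DIncGraph (fun (x : V) (s : ↥𝓑) => x ∈ (s : Set V)))
          (Set.range (Sum.inl : V → V ⊕ ↥𝓑)) (Subgroup.map φ (N.subgroupOf G)) r ∧
        LocallyDistTrans (DIncGraph (fun (x : V) (s : ↥𝓑) => x ∈ (s : Set V)))
          φ.range 4) := by
  rintro _ rfl
  have h₀₁ : (⟨0, by omega⟩ : Fin r) ≠ ⟨1, by omega⟩ := by simp [Fin.ext_iff]
  have hsup : ∀ i j, i ≠ j → Ms i ⊔ Ms j = ⊤ := fun _ _ => sup_eq_top_of_ne hb3 h₀₁ hc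
  have hGacts := image_mem_cosets hG hb1
  have hNG : N ≤ G := fun σ hσ =>
    let ⟨t, ht⟩ := (hN σ).mp hσ
    (hG σ).mpr ⟨1, G₀.one_mem, t, by simpa using ht⟩
  obtain ⟨m, hmi, hm⟩ := Submodule.exists_mem_ne_zero_of_ne_bot <|
    ne_of_forall_map_eq_self hMsinj hb2 h₀₁ (fun g => Submodule.map_bot _) ⟨0, by omega⟩
  obtain ⟨w, hw⟩ : ∃ w, w ∉ Ms ⟨0, by omega⟩ := not_forall.mp fun h =>
    ne_of_forall_map_eq_self hMsinj hb2 h₀₁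
      (fun g => by rw [Submodule.map_top, LinearEquiv.range]) _ (Submodule.eq_top_iff'.mpr h)
  have hPT := setPT_cosets hG hb2 hb3 hd hsup he fun _ _ =>
    exists_apply_eq_of_forall_notMem hG ha hb1 hm hmi
  have hNA := setNA_cosets hN hMsinj hb3 hsup h₀₁
  have hclasses := ncard_translationOrbits_cosets hN hMsinj
  rw [Nat.card_fin] at hclasses
  refine ⟨hGacts, hPT, hNA, hclasses, liftPerm hGacts, fun _ _ => rfl, fun _ _ => ⟨_, rfl⟩,
    isGraphAut_liftPerm hGacts, DIncGraph.isBipartition_range_inl _,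
    isStarlike_liftPerm hGacts hNG hNA.1 hclasses, four_le_diam_cosets hc hw,
    fun v x y i hi _ hx hy => exists_liftPerm_of_dist_eq hGacts hPT (hx.trans hy.symm)
      (hx.trans_ne (by omega))⟩
end

section
/- Let Γ be a finite connected graph, let G ≤ Aut(Γ) be transitive on the edges of Γ, let N ⊴ G, and let r ≥ 2 be an integer. Then the G-normal quotient Γ_N is isomorphic to the star K_{1,r} if and only if Γ is bipartite with an ordered bipartition (B|B') such that Γ is r-starlike relative to N (that is, B is an N-orbit on vertices and B' is a union of exactly r N-orbits on vertices). -/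
open SimpleGraph

/-! Since `G` is edge-transitive and normalises `N`, either every edge of `Γ` lies inside an
`N`-orbit or none does. If `Γ_N ≅ K_{1,r}` then `Γ_N` has an edge, so `Γ → Γ_N` is a graph
homomorphism onto a star, and pulling back the bipartition of the star gives `(B | Bᶜ)` with `B`
the orbit over the centre; the `r` leaves are the orbits in `Bᶜ`. Conversely, if `B` is a single
`N`-orbit, connectivity (with at least two vertices) gives every vertex of `Bᶜ` a neighbour in
`B`, so every orbit in `Bᶜ` is adjacent to `B` in `Γ_N`, and bipartiteness excludes all other
adjacencies: `Γ_N` is the star centred at `B`. -/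

theorem nonempty_equiv_fin_iff_natCard_eq {X : Type*} {r : ℕ} (hr : r ≠ 0) :
    Nonempty (X ≃ Fin r) ↔ Nat.card X = r := by
  refine ⟨fun ⟨e⟩ => Nat.card_eq_of_equiv_fin e, fun h => ?_⟩
  have : Finite X := Nat.finite_of_card_ne_zero (h ▸ hr)
  exact ⟨Finite.equivFinOfCardEq h⟩

namespace SimpleGraph

variable {Q Q' : Type*}

theorem completeBipartiteGraph_unit_eq_starGraph (β : Type*) :
    completeBipartiteGraph Unit β = starGraph (Sum.inl ()) := by
  ext (_ | _) (_ | _) <;> simp [starGraph_adj]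

theorem eq_starGraph_of_iso {H : SimpleGraph Q} {c : Q'} (φ : H ≃g starGraph c) :
    H = starGraph (φ.symm c) := by
  ext a b
  rw [← φ.map_adj_iff, starGraph_adj, starGraph_adj, φ.injective.ne_iff]
  simp [RelIso.eq_symm_apply]

def Iso.starGraph (ψ : Q ≃ Q') (c : Q) : starGraph c ≃g starGraph (ψ c) where
  toEquiv := ψ
  map_rel_iff' := by simp [starGraph_adj]

theorem nonempty_iso_completeBipartiteGraph_unit_iff (H : SimpleGraph Q) (β : Type*) :
    Nonempty (H ≃g completeBipartiteGraph Unit β) ↔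
      ∃ c, H = starGraph c ∧ Nonempty ({a // a ≠ c} ≃ β) := by
  rw [completeBipartiteGraph_unit_eq_starGraph]
  constructor
  · rintro ⟨φ⟩
    refine ⟨_, eq_starGraph_of_iso φ, ⟨?_⟩⟩
    refine (φ.toEquiv.subtypeEquiv (q := (· ≠ Sum.inl ())) fun a => ?_).trans
      ((Equiv.subtypeEquivRight fun x => ?_).trans Equiv.sumIsRight)
    · simp [RelIso.eq_symm_apply]
    · cases x <;> simp
  · rintro ⟨c, rfl, ⟨e⟩⟩
    classical
    let ψ : Q ≃ Unit ⊕ β :=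
      (Equiv.sumCompl (· = c)).symm.trans (Equiv.sumCongr (Equiv.ofUnique _ _) e)
    have hψ : ψ c = Sum.inl () := by simp [ψ]
    exact ⟨(Iso.starGraph ψ c).trans (by rw [hψ])⟩

end SimpleGraph

section Bipartition

variable {V : Type*} {Γ : SimpleGraph V}

theorem isBipartition_preimage_of_hom {Q : Type*} {c : Q} (f : Γ →g starGraph c) :
    IsBipartition Γ (f ⁻¹' {c}) := by
  intro u v huv
  have := starGraph_adj.mp (f.map_adj huv)
  simp only [Set.mem_preimage, Set.mem_singleton_iff]
  grind

theorem IsBipartition.nonempty [Nonempty V] {B : Set V} (hbip : IsBipartition Γ B)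
    (hnbr : ∀ v, ∃ w, Γ.Adj v w) : B.Nonempty := by
  obtain ⟨v⟩ := ‹Nonempty V›
  by_cases hv : v ∈ B
  · exact ⟨v, hv⟩
  · obtain ⟨w, hvw⟩ := hnbr v
    exact ⟨w, by simpa [hv] using hbip v w hvw⟩

end Bipartition

section OrbitQuotient

variable {V : Type*} {N : Subgroup (Equiv.Perm V)}

local notation "π" => Quotient.mk (orbitSetoid N)

theorem orbitSetoid.mk_apply_of_mem {n : Equiv.Perm V} (hn : n ∈ N) (v : V) : π (n v) = π v :=
  Quotient.sound ⟨n⁻¹, N.inv_mem hn, by simp⟩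

theorem orbitSetoid.mk_apply_eq_mk_apply {g : Equiv.Perm V} (hg : ∀ n ∈ N, g * n * g⁻¹ ∈ N)
    {u v : V} (h : π u = π v) : π (g u) = π (g v) := by
  obtain ⟨n, hn, rfl⟩ := Quotient.exact h
  exact Quotient.sound ⟨g * n * g⁻¹, hg n hn, by simp⟩

theorem POrbit_eq_preimage (x : V) : POrbit N x = π ⁻¹' {π x} := by
  ext y
  exact (Quotient.eq (r := orbitSetoid N) (x := x) (y := y)).symm.trans eq_comm

theorem ncard_setOf_POrbit (C : Set V) :
    {S | ∃ x ∈ C, S = POrbit N x}.ncard = (π '' C).ncard := by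
  have hfib : {S | ∃ x ∈ C, S = POrbit N x} = (fun a => π ⁻¹' {a}) '' (π '' C) := by
    ext S
    simp [POrbit_eq_preimage, eq_comm]
  rw [hfib]
  exact Set.ncard_image_of_injective _
    ((Set.preimage_injective.mpr Quotient.mk_surjective).comp Set.singleton_injective)

theorem quotGraph_adj {Γ : SimpleGraph V} {a b : Quotient (orbitSetoid N)} :
    (quotGraph Γ N).Adj a b ↔ a ≠ b ∧ ∃ x y, Γ.Adj x y ∧ π x = a ∧ π y = b := by
  simp only [quotGraph, fromRel_adj]
  refine and_congr_right fun _ => or_iff_left_of_imp ?_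
  rintro ⟨x, y, hxy, rfl, rfl⟩
  exact ⟨y, x, hxy.symm, rfl, rfl⟩

def quotGraphHom {Γ : SimpleGraph V} (h : ∀ ⦃u v⦄, Γ.Adj u v → π u ≠ π v) :
    Γ →g quotGraph Γ N where
  toFun := π
  map_rel' huv := quotGraph_adj.2 ⟨h huv, _, _, huv, rfl, rfl⟩

theorem orbitSetoid.mk_ne_mk_of_adj {Γ : SimpleGraph V} {G : Subgroup (Equiv.Perm V)}
    (hnorm : ∀ g ∈ G, ∀ n ∈ N, g * n * g⁻¹ ∈ N)
    (hedge : ∀ u v u' v' : V, Γ.Adj u v → Γ.Adj u' v' →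
      ∃ g ∈ G, (g u = u' ∧ g v = v') ∨ (g u = v' ∧ g v = u'))
    {x y : V} (hxy : Γ.Adj x y) (hne : π x ≠ π y) ⦃u v : V⦄ (huv : Γ.Adj u v) :
    π u ≠ π v := by
  intro h
  obtain ⟨g, hg, ⟨rfl, rfl⟩ | ⟨rfl, rfl⟩⟩ := hedge u v x y huv hxy
  · exact hne (orbitSetoid.mk_apply_eq_mk_apply (hnorm g hg) h)
  · exact hne (orbitSetoid.mk_apply_eq_mk_apply (hnorm g hg) h).symm

theorem isStarlike_preimage_iff {Γ : SimpleGraph V} {c : Quotient (orbitSetoid N)} {r : ℕ} :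
    IsStarlike Γ (π ⁻¹' {c}) N r ↔ Nat.card {a // a ≠ c} = r := by
  have hinv : ∀ n ∈ N, ∀ v : V, n v ∈ π ⁻¹' {c} ↔ v ∈ π ⁻¹' {c} := by
    intro n hn v
    simp [orbitSetoid.mk_apply_of_mem hn]
  have htrans : ∀ x ∈ π ⁻¹' {c}, ∀ y ∈ π ⁻¹' {c}, ∃ n ∈ N, n x = y :=
    fun x hx y hy => Quotient.exact (hx.trans hy.symm)
  rw [IsStarlike, ncard_setOf_POrbit, ← Set.preimage_compl,
    Set.image_preimage_eq _ Quotient.mk_surjective, ← Nat.card_coe_set_eq,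
    and_iff_right hinv, and_iff_right htrans]
  rfl

theorem IsStarlike.eq_preimage {Γ : SimpleGraph V} {B : Set V} {r : ℕ}
    (h : IsStarlike Γ B N r) {b : V} (hb : b ∈ B) : B = π ⁻¹' {π b} := by
  ext x
  refine ⟨fun hx => Quotient.sound (h.2.1 x hx b hb), fun hx => ?_⟩
  obtain ⟨n, hn, rfl⟩ := Quotient.exact hx
  exact (h.1 n hn x).mp hb

theorem IsStarlike.nontrivial {Γ : SimpleGraph V} {B : Set V} {r : ℕ}
    (h : IsStarlike Γ B N r) (hr : 2 ≤ r) : Nontrivial V := by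
  have h₁ : 1 < (π '' Bᶜ).ncard := by
    rw [← ncard_setOf_POrbit, h.2.2]
    omega
  obtain ⟨x, -, y, -, hxy⟩ :=
    Set.nontrivial_of_image _ _ (Set.one_lt_ncard_iff_nontrivial_and_finite.mp h₁).1
  exact ⟨x, y, hxy⟩

theorem quotGraph_eq_starGraph {Γ : SimpleGraph V} {c : Quotient (orbitSetoid N)}
    (hbip : IsBipartition Γ (π ⁻¹' {c})) (hnbr : ∀ v, ∃ w, Γ.Adj v w) :
    quotGraph Γ N = starGraph c := by
  have hleaf : ∀ v, π v ≠ c → ∃ w, Γ.Adj w v ∧ π w = c := by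
    intro v hv
    obtain ⟨w, hvw⟩ := hnbr v
    exact ⟨w, hvw.symm, by simpa [hv] using hbip v w hvw⟩
  ext a b
  induction a using Quotient.ind with | _ u =>
  induction b using Quotient.ind with | _ v =>
  rw [quotGraph_adj, starGraph_adj]
  refine and_congr_right fun hne => ⟨?_, ?_⟩
  · rintro ⟨x, y, hxy, hx, hy⟩
    have := hbip x y hxy
    simp only [Set.mem_preimage, Set.mem_singleton_iff, hx, hy] at this
    tauto
  · rintro (hu | hv)
    · obtain ⟨w, hwv, hw⟩ := hleaf v (hu ▸ hne.symm)
      exact ⟨w, v, hwv, hw.trans hu.symm, rfl⟩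
    · obtain ⟨w, hwu, hw⟩ := hleaf u (hv ▸ hne)
      exact ⟨u, w, hwu.symm, rfl, hw.trans hv.symm⟩

end OrbitQuotient

theorem statement8_general {V : Type*} (Γ : SimpleGraph V) (hconn : Γ.Connected)
    (G N : Subgroup (Equiv.Perm V))
    (hnorm : ∀ g ∈ G, ∀ n ∈ N, g * n * g⁻¹ ∈ N)
    (hedge : ∀ u v u' v' : V, Γ.Adj u v → Γ.Adj u' v' →
      ∃ g ∈ G, (g u = u' ∧ g v = v') ∨ (g u = v' ∧ g v = u'))
    (r : ℕ) (hr : 2 ≤ r) :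
    Nonempty (quotGraph Γ N ≃g completeBipartiteGraph Unit (Fin r)) ↔
      ∃ B : Set V, IsBipartition Γ B ∧ IsStarlike Γ B N r := by
  simp only [nonempty_iso_completeBipartiteGraph_unit_iff,
    nonempty_equiv_fin_iff_natCard_eq (by omega : r ≠ 0)]
  constructor
  · rintro ⟨c, hΓN, hcard⟩
    obtain ⟨⟨a, ha⟩⟩ : Nonempty {a // a ≠ c} := (Nat.card_pos_iff.mp (by omega)).1
    obtain ⟨-, x, y, hxy, rfl, rfl⟩ :=
      quotGraph_adj.mp (hΓN ▸ starGraph_center_adj ha.symm)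
    have hcross := orbitSetoid.mk_ne_mk_of_adj hnorm hedge hxy ha.symm
    exact ⟨_, isBipartition_preimage_of_hom
      ((Hom.ofLE hΓN.le).comp (quotGraphHom hcross)), isStarlike_preimage_iff.mpr hcard⟩
  · rintro ⟨B, hbip, hB⟩
    have := hB.nontrivial hr
    have hnbr := hconn.preconnected.exists_adj_of_nontrivial
    obtain ⟨b, hb⟩ := hbip.nonempty hnbr
    rw [hB.eq_preimage hb] at hbip hB
    exact ⟨_, quotGraph_eq_starGraph hbip hnbr, isStarlike_preimage_iff.mp hB⟩

/-- **Proposition `starquo=starlike`**.  For a finite connected `G`-edge-transitive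
graph `Γ` and `N ⊴ G ≤ Aut Γ`, the normal quotient `Γ_N` is isomorphic to the star
`K_{1,r}` if and only if `Γ` is bipartite with an ordered bipartition `(B|Bᶜ)` relative
to which it is `r`-starlike with respect to `N`. -/
theorem statement8 {V : Type*} [Fintype V] (Γ : SimpleGraph V) (hconn : Γ.Connected)
    (G N : Subgroup (Equiv.Perm V)) (hGaut : ∀ g ∈ G, IsGraphAut Γ g)
    (hNG : N ≤ G) (hnorm : ∀ g ∈ G, ∀ n ∈ N, g * n * g⁻¹ ∈ N)
    (hedge : ∀ u v u' v' : V, Γ.Adj u v → Γ.Adj u' v' →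
      ∃ g ∈ G, (g u = u' ∧ g v = v') ∨ (g u = v' ∧ g v = u'))
    (r : ℕ) (hr : 2 ≤ r) :
    Nonempty (quotGraph Γ N ≃g completeBipartiteGraph Unit (Fin r)) ↔
      ∃ B : Set V, IsBipartition Γ B ∧ IsStarlike Γ B N r :=
  statement8_general Γ hconn G N hnorm hedge r hr
end
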